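/- Let X be a smooth complete toric variety and let γ ∈ A_1(X) be the class corresponding to a relation a_1x_1 + ⋯ + a_hx_h − (b_1y_1 + ⋯ + b_ky_k) = 0 among elements x_1,...,x_h,y_1,...,y_k of G(Σ_X), with all a_i, b_j positive integers. If ⟨y_1,...,y_k⟩ is a cone of Σ_X, then γ ∈ NE(X); equivalently, γ has nonnegative intersection with every invariant nef divisor D_φ = −Σ_{x∈G(Σ_X)} φ(x)V(x) associated to an upper convex support function φ on Σ_X. -/

import Mathlib

/-! Combinatorial framework for smooth complete toric varieties, following
Casagrande, "Contractible classes in toric varieties". A smooth fan is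
recorded by the finite sets of ray generators of its cones; `A_1(X)` is the
lattice of integral relations among the ray generators; irreducible curves
are abstracted in a `ToricGeom` structure; equivariant morphisms are given by
compatible linear maps of the ambient lattices. -/

/-- The lattice `N = ℤⁿ`. -/
abbrev LatZ (n : ℕ) := Fin n → ℤ

/-- `N_ℚ = ℚⁿ`. -/
abbrev LatQ (n : ℕ) := Fin n → ℚ

/-- Inclusion of the lattice into `N_ℚ`. -/
def toQ {n : ℕ} (v : LatZ n) : LatQ n := fun i => (v i : ℚ)

/-- The convex rational cone `⟨σ⟩` spanned by a finite set of lattice points. -/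
def ratCone {n : ℕ} (σ : Finset (LatZ n)) : Set (LatQ n) :=
  { x | ∃ c : LatZ n → ℚ, (∀ v, 0 ≤ c v) ∧ x = ∑ v ∈ σ, c v • toQ v }

/-- A fan in `N_ℚ`, each cone recorded by its finite set of ray generators:
the set of cones is closed under passing to subsets of the generators, and two
cones intersect along the cone spanned by the common generators. -/
structure PreFan (n : ℕ) where
  cones : Finset (Finset (LatZ n))
  downward : ∀ σ ∈ cones, ∀ τ, τ ⊆ σ → τ ∈ cones
  inter : ∀ σ ∈ cones, ∀ τ ∈ cones, ratCone σ ∩ ratCone τ = ratCone (σ ∩ τ)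

namespace PreFan

variable {n : ℕ}

/-- The set `G(Σ)` of ray generators of the fan. -/
def gens (F : PreFan n) : Finset (LatZ n) := F.cones.sup id

/-- Completeness: the support of the fan is the whole space. -/
def IsComplete (F : PreFan n) : Prop := ∀ x : LatQ n, ∃ σ ∈ F.cones, x ∈ ratCone σ

/-- Smoothness: every cone is generated by part of a `ℤ`-basis of `N`. -/
def IsSmooth (F : PreFan n) : Prop :=
  ∀ σ ∈ F.cones, ∃ b : Module.Basis (Fin n) ℤ (LatZ n), (σ : Set (LatZ n)) ⊆ Set.range ⇑b

/-- Simpliciality: the generators of every cone are linearly independent. -/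
def IsSimplicial (F : PreFan n) : Prop :=
  ∀ σ ∈ F.cones, LinearIndependent ℚ (fun v : σ => toQ (v : LatZ n))

/-- `A_1(X)`: the lattice of integral relations among the ray generators;
a relation `a` corresponds to a `1`-cycle class with `a x = γ · V(x)`. -/
def A1 (F : PreFan n) : Set (LatZ n → ℤ) :=
  { a | (∀ v, a v ≠ 0 → v ∈ F.gens) ∧ ∑ v ∈ F.gens, a v • v = 0 }

end PreFan

/-- A `ℤ`-valued relation (`1`-cycle class) viewed in `N_1(X) = A_1(X) ⊗ ℚ`. -/
def ratify {n : ℕ} (a : LatZ n → ℤ) : LatZ n → ℚ := fun v => (a v : ℚ)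

/-- The class `a` lies on the ray `ℚ_{≥0} γ`. -/
def OnRay {n : ℕ} (γ a : LatZ n → ℤ) : Prop :=
  ∃ q : ℚ, 0 ≤ q ∧ ratify a = q • ratify γ

/-- `γ` is primitive along `A_1(X) ∩ ℚ_{≥0} γ`. -/
def IsPrimitiveOnRay {n : ℕ} (F : PreFan n) (γ : LatZ n → ℤ) : Prop :=
  γ ≠ 0 ∧ ∀ a ∈ F.A1, OnRay γ a → ∃ k : ℕ, a = k • γ

/-- The `ℚ_{≥0}`-span of a set of classes. -/
def coneSpan {n : ℕ} (S : Set (LatZ n → ℚ)) : Set (LatZ n → ℚ) :=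
  { x | ∃ (k : ℕ) (c : Fin k → ℚ) (g : Fin k → (LatZ n → ℚ)),
      (∀ i, 0 ≤ c i) ∧ (∀ i, g i ∈ S) ∧ x = ∑ i, c i • g i }

/-- A primitive collection of the fan. -/
def IsPrimCollection {n : ℕ} (F : PreFan n) (P : Finset (LatZ n)) : Prop :=
  P ⊆ F.gens ∧ P ∉ F.cones ∧ ∀ x ∈ P, P.erase x ∈ F.cones

/-- `γ` is the primitive relation `∑_{x ∈ P} x = ∑_{y ∈ σ} (-γ y) y` of the
primitive collection `P`, where `σ` is the cone of the fan whose relative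
interior contains `∑_{x ∈ P} x` (the elements of negative coefficient). -/
def IsPrimRelWith {n : ℕ} (F : PreFan n) (P σ : Finset (LatZ n)) (γ : LatZ n → ℤ) : Prop :=
  IsPrimCollection F P ∧ γ ∈ F.A1 ∧ σ ∈ F.cones ∧ Disjoint P σ ∧
    (∀ x ∈ P, γ x = 1) ∧ (∀ y ∈ σ, γ y < 0) ∧ (∀ u, γ u ≠ 0 → u ∈ P ∪ σ)

/-- `γ` is the primitive relation associated to the primitive collection `P`. -/
def IsPrimRelation {n : ℕ} (F : PreFan n) (P : Finset (LatZ n)) (γ : LatZ n → ℤ) : Prop :=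
  ∃ σ, IsPrimRelWith F P σ γ

/-- `γ` is the numerical class of the invariant curve `V(τ)`, where `τ` is an
`(n-1)`-dimensional cone, wall of the two maximal cones `τ + ⟨u⟩`, `τ + ⟨w⟩`. -/
def IsInvCurveClass {n : ℕ} (F : PreFan n) (τ : Finset (LatZ n)) (γ : LatZ n → ℤ) : Prop :=
  τ ∈ F.cones ∧ τ.card + 1 = n ∧ γ ∈ F.A1 ∧
    ∃ u w : LatZ n, u ≠ w ∧ u ∉ τ ∧ w ∉ τ ∧ insert u τ ∈ F.cones ∧ insert w τ ∈ F.cones ∧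
      γ u = 1 ∧ γ w = 1 ∧ ∀ z, γ z ≠ 0 → z ∈ insert u (insert w τ)

/-- Abstract geometric data on the toric variety `X` of the fan `F`: the type of
irreducible (reduced) curves of `X` together with their numerical classes, and
the invariant curves among them. -/
structure ToricGeom {n : ℕ} (F : PreFan n) where
  Curve : Type
  curveClass : Curve → LatZ n → ℤ
  curveClass_mem : ∀ C, curveClass C ∈ F.A1
  invCurve : ∀ (τ : Finset (LatZ n)) (γ : LatZ n → ℤ), IsInvCurveClass F τ γ → Curve
  invCurve_class : ∀ τ γ h, curveClass (invCurve τ γ h) = γ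

/-- The Mori cone `NE(X)`: the cone generated by classes of effective curves. -/
def ToricGeom.NE {n : ℕ} {F : PreFan n} (G : ToricGeom F) : Set (LatZ n → ℚ) :=
  coneSpan { x | ∃ C, x = ratify (G.curveClass C) }

/-- `γ` spans an extremal ray (one-dimensional face) of the convex cone `S`. -/
def IsExtremalIn {n : ℕ} (S : Set (LatZ n → ℚ)) (γ : LatZ n → ℤ) : Prop :=
  ratify γ ∈ S ∧ γ ≠ 0 ∧
    ∀ u ∈ S, ∀ w ∈ S, (∃ q : ℚ, 0 ≤ q ∧ u + w = q • ratify γ) →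
      ∃ q : ℚ, 0 ≤ q ∧ u = q • ratify γ

/-- An extremal class of `X`: the primitive class on an extremal ray of `NE(X)`. -/
def IsExtremalClass {n : ℕ} {F : PreFan n} (G : ToricGeom F) (γ : LatZ n → ℤ) : Prop :=
  γ ∈ F.A1 ∧ IsPrimitiveOnRay F γ ∧ IsExtremalIn G.NE γ

/-- The Mori cone of the invariant surface `V(σ)` (where `σ` has dimension `n-2`),
viewed inside `N_1(X)` through the classes of the invariant curves contained in it. -/
def surfNE {n : ℕ} (F : PreFan n) (σ : Finset (LatZ n)) : Set (LatZ n → ℚ) :=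
  coneSpan { x | ∃ τ γ', σ ⊆ τ ∧ IsInvCurveClass F τ γ' ∧ x = ratify γ' }

/-- An equivariant morphism of toric varieties: a linear map of the ambient
spaces, integral on the lattices, mapping each cone of the source fan into
some cone of the target fan. -/
structure EquivMorphism {n m : ℕ} (F : PreFan n) (T : PreFan m) where
  map : LatQ n →ₗ[ℚ] LatQ m
  integral : ∀ u : LatZ n, ∃ w : LatZ m, map (toQ u) = toQ w
  compat : ∀ σ ∈ F.cones, ∃ τ ∈ T.cones, ⇑map '' ratCone σ ⊆ ratCone τ

/-- Connected fibers: surjectivity on the lattices. -/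
def EquivMorphism.ConnectedFibers {n m : ℕ} {F : PreFan n} {T : PreFan m}
    (φ : EquivMorphism F T) : Prop :=
  ∀ w : LatZ m, ∃ u : LatZ n, φ.map (toQ u) = toQ w

/-- The morphism contracts the invariant curve `V(τ)` to a point: all the cones
containing `τ` are mapped into one single cone of the target fan. -/
def EquivMorphism.ContractsCone {n m : ℕ} {F : PreFan n} {T : PreFan m}
    (φ : EquivMorphism F T) (τ : Finset (LatZ n)) : Prop :=
  ∃ τ' ∈ T.cones, ∀ σ ∈ F.cones, τ ⊆ σ → ⇑φ.map '' ratCone σ ⊆ ratCone τ'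

/-- `φ`, together with the predicate `con` recording which irreducible curves
have image a point, is the contraction of the class `γ`: it has connected
fibers, `con` is geometrically compatible on invariant curves, and the curves
mapped to points are exactly those with numerical class in `ℚ_{≥0} γ`. -/
def IsContractionOf {n m : ℕ} {F : PreFan n} (G : ToricGeom F) (γ : LatZ n → ℤ)
    (T : PreFan m) (φ : EquivMorphism F T) (con : G.Curve → Prop) : Prop :=
  φ.ConnectedFibers ∧
    (∀ τ γ' h, con (G.invCurve τ γ' h) ↔ φ.ContractsCone τ) ∧
    (∀ C, con C ↔ OnRay γ (G.curveClass C))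

/-- Contractible class (Definition 1 of the paper): `γ` is primitive along its
ray, some irreducible curve has class on the ray, and there is a toric variety
`X_γ` and an equivariant morphism `φ_γ : X → X_γ` with connected fibers
contracting exactly the irreducible curves with class in `ℚ_{≥0} γ`. -/
def IsContractible {n : ℕ} {F : PreFan n} (G : ToricGeom F) (γ : LatZ n → ℤ) : Prop :=
  γ ∈ F.A1 ∧ IsPrimitiveOnRay F γ ∧ (∃ C, OnRay γ (G.curveClass C)) ∧
    ∃ (m : ℕ) (T : PreFan m) (φ : EquivMorphism F T) (con : G.Curve → Prop),
      IsContractionOf G γ T φ con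

/-- A support function for the fan: a function linear on each cone. -/
def IsSupportFn {n : ℕ} (F : PreFan n) (f : LatQ n → ℚ) : Prop :=
  ∀ σ ∈ F.cones, ∃ l : LatQ n →ₗ[ℚ] ℚ, ∀ x ∈ ratCone σ, f x = l x

/-- Upper convexity: `f(u+v) ≥ f(u) + f(v)`. -/
def IsUpperConvex {n : ℕ} (f : LatQ n → ℚ) : Prop :=
  ∀ u v : LatQ n, f u + f v ≤ f (u + v)

/-- Integrality on the lattice. -/
def IsIntegralFn {n : ℕ} (f : LatQ n → ℚ) : Prop :=
  ∀ v : LatZ n, ∃ z : ℤ, f (toQ v) = (z : ℚ)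

/-- Projectivity of a complete toric variety: existence of a strictly upper
convex support function (equality `f(u+v) = f(u)+f(v)` only within a common cone). -/
def PreFan.IsProjective {n : ℕ} (F : PreFan n) : Prop :=
  ∃ f : LatQ n → ℚ, IsSupportFn F f ∧ IsUpperConvex f ∧
    ∀ u v : LatQ n, f (u + v) = f u + f v → ∃ σ ∈ F.cones, u ∈ ratCone σ ∧ v ∈ ratCone σ

/-- The invariant divisor `D = ∑_x D(x) V(x)` is ample: `x ↦ -D(x)` extends to an
integral strictly upper convex support function. -/
def IsAmple {n : ℕ} (F : PreFan n) (D : LatZ n → ℤ) : Prop :=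
  ∃ f : LatQ n → ℚ, IsSupportFn F f ∧ IsUpperConvex f ∧ IsIntegralFn f ∧
    (∀ u v : LatQ n, f (u + v) = f u + f v →
      ∃ σ ∈ F.cones, u ∈ ratCone σ ∧ v ∈ ratCone σ) ∧
    ∀ x ∈ F.gens, (D x : ℚ) = - f (toQ x)

/-- Intersection number `D · γ` of an invariant divisor with a `1`-cycle class. -/
def interD {n : ℕ} (F : PreFan n) (D : LatZ n → ℤ) (γ : LatZ n → ℤ) : ℤ :=
  ∑ v ∈ F.gens, D v * γ v

/-- `Fx` is the smooth equivariant blow-up (star subdivision) of `Fy` along the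
cone `V`, with new ray generated by `v = ∑_{w ∈ V} w`. -/
def IsBlowup {n : ℕ} (Fx Fy : PreFan n) (V : Finset (LatZ n)) (v : LatZ n) : Prop :=
  V ∈ Fy.cones ∧ 2 ≤ V.card ∧ v ∉ Fy.gens ∧ (v = ∑ w ∈ V, w) ∧
    ∀ σ : Finset (LatZ n),
      σ ∈ Fx.cones ↔
        ((v ∉ σ ∧ σ ∈ Fy.cones ∧ ¬ V ⊆ σ) ∨
         (v ∈ σ ∧ ∃ τ ∈ Fy.cones, V ⊆ τ ∧ ∃ w ∈ V, σ ⊆ insert v (τ.erase w)))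

/-- The class `δ` of a line in a fiber of the blow-up, i.e. of the relation
`∑_{w ∈ V} w = v`. -/
def blowDelta {n : ℕ} (V : Finset (LatZ n)) (v : LatZ n) : LatZ n → ℤ :=
  fun u => if u = v then -1 else if u ∈ V then 1 else 0

/-- Push-forward `π_*` of `1`-cycle classes along the blow-down (substitution
`v = ∑_{w ∈ V} w` in relations). -/
def pushf {n : ℕ} (V : Finset (LatZ n)) (v : LatZ n) (a : LatZ n → ℤ) : LatZ n → ℤ :=
  fun u => if u = v then 0 else if u ∈ V then a u + a v else a u

/-- `φ` is a `ℙ^d`-bundle: there are `d+1` rays spanning the fibers, and every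
cone of the source fan splits as a proper face of the fiber `ℙ^d` plus a cone
mapped injectively to the base. -/
def IsProjBundle {n m : ℕ} {F : PreFan n} {T : PreFan m} (φ : EquivMorphism F T)
    (d : ℕ) : Prop :=
  ∃ x : Fin (d + 1) → LatZ n,
    Function.Injective x ∧ (∀ i, x i ∈ F.gens) ∧ (∀ i, φ.map (toQ (x i)) = 0) ∧
      (∑ i, toQ (x i)) = 0 ∧
      ∀ σ ∈ F.cones, ∃ (s : Finset (Fin (d + 1))) (L : Finset (LatZ n)),
        s ≠ Finset.univ ∧ σ = L ∪ s.image x ∧ Set.InjOn ⇑φ.map (ratCone L)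

/-- The restriction of `φ` to the invariant subvariety `V(σ₀)` is a
`ℙ^d`-bundle onto its image. -/
def IsProjBundleOver {n m : ℕ} {F : PreFan n} {T : PreFan m} (φ : EquivMorphism F T)
    (σ₀ : Finset (LatZ n)) (d : ℕ) : Prop :=
  ∃ x : Fin (d + 1) → LatZ n,
    Function.Injective x ∧ (∀ i, x i ∈ F.gens) ∧
      ∀ σ ∈ F.cones, σ₀ ⊆ σ → ∃ (s : Finset (Fin (d + 1))) (L : Finset (LatZ n)),
        s ≠ Finset.univ ∧ σ = (σ₀ ∪ L) ∪ s.image x ∧ Set.InjOn ⇑φ.map (ratCone (σ₀ ∪ L))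

/-- `φ` is a smooth equivariant blow-up: the source fan is the star subdivision
of a fan that represents, through `φ.map`, the target fan. -/
def IsBlowupMorphism {n m : ℕ} {F : PreFan n} {T : PreFan m} (φ : EquivMorphism F T) : Prop :=
  ∃ (T' : PreFan n) (V : Finset (LatZ n)) (v : LatZ n),
    IsBlowup F T' V v ∧
      (∀ σ ∈ T'.cones, ∃ τ ∈ T.cones, ⇑φ.map '' ratCone σ = ratCone τ) ∧
      (∀ τ ∈ T.cones, ∃ σ ∈ T'.cones, ⇑φ.map '' ratCone σ = ratCone τ)


/-! ### Auxiliary development for statement0 -/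

section Statement0Aux

open Finset

namespace Stmt0

variable {n : ℕ}

/-! #### Basic lemmas on `toQ` and `ratCone` -/

theorem toQ_add (u v : LatZ n) : toQ (u + v) = toQ u + toQ v := by
  funext i; simp [toQ]

theorem toQ_zero : toQ (0 : LatZ n) = 0 := by funext i; simp [toQ]

theorem toQ_zsmul (m : ℤ) (v : LatZ n) : toQ (m • v) = (m : ℚ) • toQ v := by
  funext i; simp [toQ]

theorem toQ_sum {α : Type*} (s : Finset α) (g : α → LatZ n) :
    toQ (∑ a ∈ s, g a) = ∑ a ∈ s, toQ (g a) := by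
  classical
  induction s using Finset.induction with
  | empty => simp [toQ_zero]
  | insert _ _ h ih => rename_i a s; simp [Finset.sum_insert h, toQ_add, ih]

theorem toQ_injective : Function.Injective (toQ (n := n)) := by
  intro u v h
  funext i
  have := congrFun h i
  simpa [toQ] using this

theorem mem_ratCone_of_coeffs {σ : Finset (LatZ n)} {x : LatQ n} (c : LatZ n → ℚ)
    (hc : ∀ v ∈ σ, 0 ≤ c v) (hx : x = ∑ v ∈ σ, c v • toQ v) : x ∈ ratCone σ := by
  classical
  refine ⟨fun v => if v ∈ σ then c v else 0, ?_, ?_⟩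
  · intro v; dsimp only; by_cases h : v ∈ σ
    · simpa [h] using hc v h
    · simp [h]
  · rw [hx]; apply Finset.sum_congr rfl; intro v hv; simp [hv]

theorem gen_mem_ratCone {σ : Finset (LatZ n)} {v : LatZ n} (hv : v ∈ σ) :
    toQ v ∈ ratCone σ := by
  classical
  refine mem_ratCone_of_coeffs (fun u => if u = v then 1 else 0)
    (by intro u _; split <;> norm_num) ?_
  have h1 : ∀ u ∈ σ, (if u = v then (1:ℚ) else 0) • toQ u = if u = v then toQ u else 0 := by
    intro u _; split <;> simp
  rw [Finset.sum_congr rfl h1, Finset.sum_ite_eq' σ v (fun u => toQ u)]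
  simp [hv]

theorem zero_mem_ratCone (σ : Finset (LatZ n)) : (0 : LatQ n) ∈ ratCone σ :=
  ⟨0, by intro v; simp, by simp⟩

theorem ratCone_mono {σ τ : Finset (LatZ n)} (h : σ ⊆ τ) : ratCone σ ⊆ ratCone τ := by
  rintro x ⟨c, hc, rfl⟩
  refine mem_ratCone_of_coeffs (fun v => if v ∈ σ then c v else 0)
    (by intro v _; split; exacts [hc _, le_refl 0]) ?_
  rw [← Finset.sum_subset h (by intro v _ hv; simp [hv])]
  apply Finset.sum_congr rfl; intro v hv; simp [hv]

theorem smul_mem_ratCone {σ : Finset (LatZ n)} {x : LatQ n} {q : ℚ} (hq : 0 ≤ q)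
    (hx : x ∈ ratCone σ) : q • x ∈ ratCone σ := by
  obtain ⟨c, hc, rfl⟩ := hx
  refine ⟨fun v => q * c v, fun v => mul_nonneg hq (hc v), ?_⟩
  rw [Finset.smul_sum]
  apply Finset.sum_congr rfl; intro v _; rw [smul_smul]

end Stmt0

end Statement0Aux

namespace Stmt0

open Finset

variable {n : ℕ} {F : PreFan n}

/-! #### Charts: coordinates attached to each cone of a smooth fan -/

theorem toQ_mem_spanB (b : Module.Basis (Fin n) ℤ (LatZ n)) (z : LatZ n) :
    toQ z ∈ Submodule.span ℚ (Set.range fun i => toQ (b i)) := by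
  have h : toQ z = ∑ i, ((b.repr z i : ℚ)) • toQ (b i) := by
    have h2 : toQ z = toQ (∑ i, b.repr z i • b i) := by rw [Module.Basis.sum_repr b z]
    rw [h2, toQ_sum]
    apply Finset.sum_congr rfl
    intro i _
    rw [toQ_zsmul]
  rw [h]
  exact Submodule.sum_mem _ fun i _ =>
    Submodule.smul_mem _ _ (Submodule.subset_span ⟨i, rfl⟩)

theorem span_topQ (b : Module.Basis (Fin n) ℤ (LatZ n)) :
    ⊤ ≤ Submodule.span ℚ (Set.range fun i => toQ (b i)) := by
  intro x _
  have hx : x = ∑ j, x j • toQ (Pi.single j (1:ℤ)) := by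
    conv_lhs => rw [pi_eq_sum_univ x]
    apply Finset.sum_congr rfl; intro j _
    congr 1
    funext i
    simp [toQ, Pi.single_apply, eq_comm]
  rw [hx]
  exact Submodule.sum_mem _ fun j _ => Submodule.smul_mem _ _ (toQ_mem_spanB b _)

variable (hs : F.IsSmooth)

/-- The `ℤ`-basis attached to a cone by smoothness. -/
noncomputable def bz (σ : Finset (LatZ n)) (hσ : σ ∈ F.cones) : Module.Basis (Fin n) ℤ (LatZ n) :=
  (hs σ hσ).choose

theorem bz_range {σ : Finset (LatZ n)} (hσ : σ ∈ F.cones) {v : LatZ n} (hv : v ∈ σ) :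
    ∃ i, bz hs σ hσ i = v :=
  (hs σ hσ).choose_spec hv

theorem bz_inj {σ : Finset (LatZ n)} (hσ : σ ∈ F.cones) :
    Function.Injective (bz hs σ hσ) :=
  Module.Basis.injective _

/-- The associated `ℚ`-basis of `ℚⁿ`. -/
noncomputable def bq (σ : Finset (LatZ n)) (hσ : σ ∈ F.cones) : Module.Basis (Fin n) ℚ (LatQ n) :=
  basisOfTopLeSpanOfCardEqFinrank (fun i => toQ (bz hs σ hσ i)) (span_topQ _)
    (by simp [Module.finrank_fin_fun])

theorem bq_apply {σ : Finset (LatZ n)} (hσ : σ ∈ F.cones) (i : Fin n) :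
    bq hs σ hσ i = toQ (bz hs σ hσ i) := by
  have := coe_basisOfTopLeSpanOfCardEqFinrank (fun i => toQ (bz hs σ hσ i)) (span_topQ _)
    (by simp [Module.finrank_fin_fun])
  exact congrFun this i

/-- Index of a generator in the chart basis. -/
noncomputable def idx {σ : Finset (LatZ n)} (hσ : σ ∈ F.cones) {v : LatZ n} (hv : v ∈ σ) :
    Fin n :=
  (bz_range hs hσ hv).choose

theorem bz_idx {σ : Finset (LatZ n)} (hσ : σ ∈ F.cones) {v : LatZ n} (hv : v ∈ σ) :
    bz hs σ hσ (idx hs hσ hv) = v :=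
  (bz_range hs hσ hv).choose_spec

theorem idx_bz {σ : Finset (LatZ n)} (hσ : σ ∈ F.cones) {i : Fin n}
    (h : bz hs σ hσ i ∈ σ) : idx hs hσ h = i :=
  bz_inj hs hσ (bz_idx hs hσ h)

/-- Coordinate vector of `y` in the chart of `σ`, as a function on the lattice
supported on `σ`. -/
noncomputable def cvec (σ : Finset (LatZ n)) (hσ : σ ∈ F.cones) (y : LatQ n) :
    LatZ n → ℚ :=
  fun u => if hu : u ∈ σ then (bq hs σ hσ).repr y (idx hs hσ hu) else 0

theorem cvec_supported {σ : Finset (LatZ n)} (hσ : σ ∈ F.cones) (y : LatQ n) {u : LatZ n}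
    (hu : u ∉ σ) : cvec hs σ hσ y u = 0 := by
  simp [cvec, hu]

/-- The index set of a cone inside its chart. -/
noncomputable def idxSet (σ : Finset (LatZ n)) (hσ : σ ∈ F.cones) : Finset (Fin n) :=
  Finset.univ.filter (fun i => bz hs σ hσ i ∈ σ)

theorem mem_idxSet {σ : Finset (LatZ n)} (hσ : σ ∈ F.cones) (i : Fin n) :
    i ∈ idxSet hs σ hσ ↔ bz hs σ hσ i ∈ σ := by
  simp [idxSet]

theorem image_idxSet {σ : Finset (LatZ n)} (hσ : σ ∈ F.cones) :
    (idxSet hs σ hσ).image (bz hs σ hσ) = σ := by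
  apply Finset.Subset.antisymm
  · intro v hv
    obtain ⟨i, hi, rfl⟩ := Finset.mem_image.1 hv
    exact (mem_idxSet hs hσ i).1 hi
  · intro v hv
    refine Finset.mem_image.2 ⟨idx hs hσ hv, ?_, bz_idx hs hσ hv⟩
    rw [mem_idxSet hs hσ, bz_idx hs hσ hv]
    exact hv

theorem card_idxSet {σ : Finset (LatZ n)} (hσ : σ ∈ F.cones) :
    (idxSet hs σ hσ).card = σ.card := by
  conv_rhs => rw [← image_idxSet hs hσ]
  rw [Finset.card_image_of_injective _ (bz_inj hs hσ)]

include hs in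
theorem card_le_of_mem_cones {σ : Finset (LatZ n)} (hσ : σ ∈ F.cones) : σ.card ≤ n := by
  rw [← card_idxSet hs hσ]
  simpa using Finset.card_le_card (Finset.subset_univ (idxSet hs σ hσ))

theorem sum_sigma_eq_sum_idx {σ : Finset (LatZ n)} (hσ : σ ∈ F.cones) {M : Type*}
    [AddCommMonoid M] (g : LatZ n → M) :
    ∑ v ∈ σ, g v = ∑ i ∈ idxSet hs σ hσ, g (bz hs σ hσ i) := by
  conv_lhs => rw [← image_idxSet hs hσ]
  rw [Finset.sum_image (fun a _ b _ h => bz_inj hs hσ h)]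

/-- Master lemma: the coordinate vector of an explicit combination supported on `σ`. -/
theorem cvec_spec {σ : Finset (LatZ n)} (hσ : σ ∈ F.cones) (c : LatZ n → ℚ)
    (hsupp : ∀ u, u ∉ σ → c u = 0) (u : LatZ n) :
    cvec hs σ hσ (∑ v ∈ σ, c v • toQ v) u = c u := by
  classical
  set b := bz hs σ hσ with hb
  set ct : Fin n → ℚ := fun i => if b i ∈ σ then c (b i) else 0 with hct
  have hy : (∑ v ∈ σ, c v • toQ v) = ∑ i, ct i • bq hs σ hσ i := by
    rw [sum_sigma_eq_sum_idx hs hσ]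
    rw [← Finset.sum_subset (Finset.subset_univ (idxSet hs σ hσ))]
    · apply Finset.sum_congr rfl
      intro i hi
      have hmem : b i ∈ σ := (mem_idxSet hs hσ i).1 hi
      rw [bq_apply, hct]
      rw [hb] at hmem
      simp [hmem, hb]
    · intro i _ hi
      have : ¬ b i ∈ σ := fun hmem => hi ((mem_idxSet hs hσ i).2 hmem)
      simp [hct, this]
  have hrepr : ⇑((bq hs σ hσ).repr (∑ v ∈ σ, c v • toQ v)) = ct := by
    rw [hy]; exact Module.Basis.repr_sum_self _ _
  by_cases hu : u ∈ σ
  · have h1 : b (idx hs hσ hu) = u := bz_idx hs hσ hu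
    simp only [cvec, dif_pos hu, hrepr, hct, h1, if_pos hu]
  · rw [cvec_supported hs hσ _ hu, hsupp u hu]

theorem cvec_gen {σ : Finset (LatZ n)} (hσ : σ ∈ F.cones) {v : LatZ n} (hv : v ∈ σ)
    (u : LatZ n) : cvec hs σ hσ (toQ v) u = if u = v then 1 else 0 := by
  classical
  have h0 : toQ v = ∑ u ∈ σ, (if u = v then (1:ℚ) else 0) • toQ u := by
    have h1 : ∀ u ∈ σ, (if u = v then (1:ℚ) else 0) • toQ u = if u = v then toQ u else 0 := by
      intro u _; split <;> simp
    rw [Finset.sum_congr rfl h1, Finset.sum_ite_eq' σ v (fun u => toQ u)]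
    simp [hv]
  have h2 := cvec_spec hs hσ (fun u => if u = v then (1:ℚ) else 0)
    (fun u hu => by simp only [ite_eq_right_iff]; rintro rfl; exact absurd hv hu) u
  rw [← h0] at h2
  exact h2

theorem cvec_add {σ : Finset (LatZ n)} (hσ : σ ∈ F.cones) (y z : LatQ n) (u : LatZ n) :
    cvec hs σ hσ (y + z) u = cvec hs σ hσ y u + cvec hs σ hσ z u := by
  by_cases hu : u ∈ σ <;> simp [cvec, hu]

theorem cvec_smul {σ : Finset (LatZ n)} (hσ : σ ∈ F.cones) (q : ℚ) (y : LatQ n)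
    (u : LatZ n) : cvec hs σ hσ (q • y) u = q * cvec hs σ hσ y u := by
  by_cases hu : u ∈ σ <;> simp [cvec, hu]

theorem cvec_sub {σ : Finset (LatZ n)} (hσ : σ ∈ F.cones) (y z : LatQ n) (u : LatZ n) :
    cvec hs σ hσ (y - z) u = cvec hs σ hσ y u - cvec hs σ hσ z u := by
  by_cases hu : u ∈ σ <;> simp [cvec, hu]

theorem cvec_zero {σ : Finset (LatZ n)} (hσ : σ ∈ F.cones) (u : LatZ n) :
    cvec hs σ hσ 0 u = 0 := by
  by_cases hu : u ∈ σ <;> simp [cvec, hu]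

theorem reprQ_toQ {σ : Finset (LatZ n)} (hσ : σ ∈ F.cones) (z : LatZ n) (i : Fin n) :
    (bq hs σ hσ).repr (toQ z) i = ((bz hs σ hσ).repr z i : ℚ) := by
  have hz : toQ z = ∑ j, ((bz hs σ hσ).repr z j : ℚ) • bq hs σ hσ j := by
    conv_lhs => rw [← Module.Basis.sum_repr (bz hs σ hσ) z]
    rw [toQ_sum]
    apply Finset.sum_congr rfl
    intro j _
    rw [toQ_zsmul, bq_apply]
  rw [hz]
  have := Module.Basis.repr_sum_self (bq hs σ hσ) (fun j => ((bz hs σ hσ).repr z j : ℚ))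
  exact congrFun this i

theorem cvec_int {σ : Finset (LatZ n)} (hσ : σ ∈ F.cones) (z : LatZ n) (u : LatZ n) :
    ∃ m : ℤ, cvec hs σ hσ (toQ z) u = (m : ℚ) := by
  by_cases hu : u ∈ σ
  · exact ⟨(bz hs σ hσ).repr z (idx hs hσ hu), by simp [cvec, hu, reprQ_toQ]⟩
  · exact ⟨0, by simp [cvec_supported hs hσ _ hu]⟩

/-- For a member of `ratCone σ`: nonnegative coordinates and reconstruction. -/
theorem cvec_of_mem {σ : Finset (LatZ n)} (hσ : σ ∈ F.cones) {y : LatQ n}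
    (hy : y ∈ ratCone σ) :
    (∀ u ∈ σ, 0 ≤ cvec hs σ hσ y u) ∧ y = ∑ u ∈ σ, cvec hs σ hσ y u • toQ u := by
  classical
  obtain ⟨c, hc, rfl⟩ := hy
  set c' : LatZ n → ℚ := fun u => if u ∈ σ then c u else 0 with hc'
  have hsum : (∑ v ∈ σ, c v • toQ v) = ∑ v ∈ σ, c' v • toQ v := by
    apply Finset.sum_congr rfl; intro v hv; simp [hc', hv]
  have hsp := cvec_spec hs hσ c' (fun u hu => by simp [hc', hu])
  rw [hsum]
  constructor
  · intro u hu
    rw [hsp u]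
    simp [hc', hu]; exact hc u
  · apply Finset.sum_congr rfl
    intro v hv
    rw [hsp v]

/-- Membership in the cone of a maximal cone via coordinates. -/
theorem sum_cvec {σ : Finset (LatZ n)} (hσ : σ ∈ F.cones) (hcard : σ.card = n)
    (y : LatQ n) : ∑ u ∈ σ, cvec hs σ hσ y u • toQ u = y := by
  have hJ : idxSet hs σ hσ = Finset.univ := by
    apply Finset.eq_univ_of_card
    rw [card_idxSet hs hσ, hcard, Fintype.card_fin]
  rw [sum_sigma_eq_sum_idx hs hσ]
  have h1 : ∀ i ∈ idxSet hs σ hσ, cvec hs σ hσ y (bz hs σ hσ i) • toQ (bz hs σ hσ i)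
      = (bq hs σ hσ).repr y i • bq hs σ hσ i := by
    intro i hi
    have hmem : bz hs σ hσ i ∈ σ := (mem_idxSet hs hσ i).1 hi
    rw [bq_apply]
    congr 1
    simp only [cvec, dif_pos hmem, idx_bz hs hσ hmem]
  rw [Finset.sum_congr rfl h1, hJ]
  exact Module.Basis.sum_repr _ _

theorem mem_max_iff {σ : Finset (LatZ n)} (hσ : σ ∈ F.cones) (hcard : σ.card = n)
    (y : LatQ n) : y ∈ ratCone σ ↔ ∀ u ∈ σ, 0 ≤ cvec hs σ hσ y u := by
  constructor
  · intro hy; exact (cvec_of_mem hs hσ hy).1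
  · intro h
    exact mem_ratCone_of_coeffs _ h (sum_cvec hs hσ hcard y).symm

end Stmt0

namespace Stmt0

open Finset

variable {n : ℕ} {F : PreFan n} (hs : F.IsSmooth)

/-- Full `ℚ`-coordinates of a combination of generators of `σ`. -/
theorem reprQ_spec {σ : Finset (LatZ n)} (hσ : σ ∈ F.cones) (c : LatZ n → ℚ) :
    ⇑((bq hs σ hσ).repr (∑ v ∈ σ, c v • toQ v))
      = fun i => if bz hs σ hσ i ∈ σ then c (bz hs σ hσ i) else 0 := by
  classical
  set b := bz hs σ hσ with hb
  set ct : Fin n → ℚ := fun i => if b i ∈ σ then c (b i) else 0 with hct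
  have hy : (∑ v ∈ σ, c v • toQ v) = ∑ i, ct i • bq hs σ hσ i := by
    rw [sum_sigma_eq_sum_idx hs hσ]
    rw [← Finset.sum_subset (Finset.subset_univ (idxSet hs σ hσ))]
    · apply Finset.sum_congr rfl
      intro i hi
      have hmem : b i ∈ σ := (mem_idxSet hs hσ i).1 hi
      rw [bq_apply, hct]
      rw [hb] at hmem
      simp [hmem, hb]
    · intro i _ hi
      have : ¬ b i ∈ σ := fun hmem => hi ((mem_idxSet hs hσ i).2 hmem)
      simp [hct, this]
  rw [hy]
  exact Module.Basis.repr_sum_self _ _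

/-- Two cones of the fan give the same coordinates on a common point. -/
theorem cvec_share {A B : Finset (LatZ n)} (hA : A ∈ F.cones) (hB : B ∈ F.cones)
    {x : LatQ n} (hxA : x ∈ ratCone A) (hxB : x ∈ ratCone B) :
    cvec hs A hA x = cvec hs B hB x := by
  classical
  have hmem : x ∈ ratCone (A ∩ B) := by
    rw [← F.inter A hA B hB]; exact ⟨hxA, hxB⟩
  obtain ⟨c, hc, hx⟩ := hmem
  set c'' : LatZ n → ℚ := fun u => if u ∈ A ∩ B then c u else 0 with hc''
  have key : ∀ (D : Finset (LatZ n)) (hD : D ∈ F.cones), A ∩ B ⊆ D →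
      cvec hs D hD x = c'' := by
    intro D hD hsub
    have hxD : x = ∑ v ∈ D, c'' v • toQ v := by
      rw [hx, ← Finset.sum_subset hsub]
      · apply Finset.sum_congr rfl; intro v hv; rw [hc'']; simp only [if_pos hv]
      · intro v _ hv; rw [hc'']; simp only [if_neg hv, zero_smul]
    funext u
    rw [hxD]
    exact cvec_spec hs hD c'' (fun u hu => by
      rw [hc'']; exact if_neg (fun hmem => hu (hsub hmem))) u
  rw [key A hA Finset.inter_subset_left, key B hB Finset.inter_subset_right]

theorem nonneg_of_arb_small {a b : ℚ}
    (H : ∀ δ : ℚ, 0 < δ → ∃ ε : ℚ, 0 < ε ∧ ε < δ ∧ 0 ≤ a + ε * b) : 0 ≤ a := by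
  by_contra hneg
  push_neg at hneg
  have hδ : 0 < -a / (|b| + 1) := div_pos (by linarith) (by positivity)
  obtain ⟨ε, hε, hεδ, hok⟩ := H _ hδ
  have h1 : ε * b ≤ ε * |b| := by
    apply mul_le_mul_of_nonneg_left (le_abs_self b) hε.le
  have h2 : ε * (|b| + 1) < -a := by
    have := mul_lt_mul_of_pos_right hεδ (by positivity : (0:ℚ) < |b| + 1)
    rwa [div_mul_cancel₀] at this
    positivity
  nlinarith [abs_nonneg b]

include hs in
/-- A cone containing points `p + ε t` for arbitrarily small `ε > 0` contains `p`. -/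
theorem mem_of_arb_small {τ : Finset (LatZ n)} (hτ : τ ∈ F.cones) (p t : LatQ n)
    (H : ∀ δ : ℚ, 0 < δ → ∃ ε : ℚ, 0 < ε ∧ ε < δ ∧ p + ε • t ∈ ratCone τ) :
    p ∈ ratCone τ := by
  classical
  obtain ⟨ε₁, hε₁, _, hm₁⟩ := H 1 one_pos
  obtain ⟨ε₂, hε₂, hε₂₁, hm₂⟩ := H ε₁ hε₁
  have hne : ε₁ - ε₂ ≠ 0 := by intro h; rw [sub_eq_zero] at h; exact hε₂₁.ne' h
  have hc : ∀ ε : ℚ, ∀ u, cvec hs τ hτ (p + ε • t) u = cvec hs τ hτ p u + ε * cvec hs τ hτ t u := by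
    intro ε u; rw [cvec_add, cvec_smul]
  have R₁ := cvec_of_mem hs hτ hm₁
  have R₂ := cvec_of_mem hs hτ hm₂
  -- reconstruction of t
  have ht : t = ∑ u ∈ τ, cvec hs τ hτ t u • toQ u := by
    have hsub : (ε₁ - ε₂) • t = ∑ u ∈ τ, (ε₁ - ε₂) • (cvec hs τ hτ t u • toQ u) := by
      have e1 := R₁.2
      have e2 := R₂.2
      have : (p + ε₁ • t) - (p + ε₂ • t)
          = ∑ u ∈ τ, (cvec hs τ hτ (p + ε₁ • t) u - cvec hs τ hτ (p + ε₂ • t) u) • toQ u := by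
        conv_lhs => rw [e1, e2]
        rw [← Finset.sum_sub_distrib]
        apply Finset.sum_congr rfl
        intro u _
        rw [sub_smul]
      have hlhs : (p + ε₁ • t) - (p + ε₂ • t) = (ε₁ - ε₂) • t := by
        rw [sub_smul]; abel
      rw [hlhs] at this
      rw [this]
      apply Finset.sum_congr rfl
      intro u _
      rw [hc, hc, smul_smul]
      congr 1
      ring
    have := congrArg (fun y => (ε₁ - ε₂)⁻¹ • y) hsub
    simpa [smul_smul, ← mul_assoc, inv_mul_cancel₀ hne, Finset.smul_sum] using this
  -- reconstruction of p
  have hp : ∑ u ∈ τ, cvec hs τ hτ p u • toQ u = p := by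
    have e3 : p = (∑ u ∈ τ, cvec hs τ hτ (p + ε₁ • t) u • toQ u)
        - ε₁ • (∑ u ∈ τ, cvec hs τ hτ t u • toQ u) := by
      rw [← R₁.2, ← ht]; abel
    conv_rhs => rw [e3]
    rw [Finset.smul_sum, ← Finset.sum_sub_distrib]
    apply Finset.sum_congr rfl
    intro u _
    rw [hc, smul_smul, ← sub_smul]
    congr 1
    ring
  -- nonnegativity
  refine mem_ratCone_of_coeffs _ (fun u hu => ?_) hp.symm
  apply nonneg_of_arb_small (b := cvec hs τ hτ t u)
  intro δ hδ
  obtain ⟨ε, hε, hεδ, hm⟩ := H δ hδ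
  refine ⟨ε, hε, hεδ, ?_⟩
  rw [← hc]
  exact (cvec_of_mem hs hτ hm).1 u hu

include hs in
/-- Relative interior trick: if the barycenter of `σ` lies in `ratCone τ` then `σ ⊆ τ`. -/
theorem subset_of_bary_mem {σ τ : Finset (LatZ n)} (hσ : σ ∈ F.cones) (hτ : τ ∈ F.cones)
    (h : (∑ v ∈ σ, toQ v) ∈ ratCone τ) : σ ⊆ τ := by
  classical
  set p : LatQ n := ∑ v ∈ σ, toQ v with hp
  have hpσ : p ∈ ratCone σ :=
    mem_ratCone_of_coeffs (fun _ => 1) (fun _ _ => zero_le_one) (by simp [hp])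
  have hmem : p ∈ ratCone (σ ∩ τ) := by
    rw [← F.inter σ hσ τ hτ]; exact ⟨hpσ, h⟩
  obtain ⟨c, hc, hx⟩ := hmem
  set c'' : LatZ n → ℚ := fun u => if u ∈ σ ∩ τ then c u else 0 with hc''
  have hST : σ ∩ τ ⊆ σ := Finset.inter_subset_left
  have hxσ : p = ∑ v ∈ σ, c'' v • toQ v := by
    rw [hx, ← Finset.sum_subset hST]
    · apply Finset.sum_congr rfl; intro v hv; rw [hc'']; simp only [if_pos hv]
    · intro v _ hv; rw [hc'']; simp only [if_neg hv, zero_smul]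
  have h1 : ∀ u, cvec hs σ hσ p u = c'' u := by
    intro u
    rw [hxσ]
    exact cvec_spec hs hσ c'' (fun u hu => by
      rw [hc'']; exact if_neg (fun hmem => hu (Finset.mem_inter.1 hmem).1)) u
  have h2 : ∀ u, cvec hs σ hσ p u = (fun u => if u ∈ σ then (1:ℚ) else 0) u := by
    intro u
    have : p = ∑ v ∈ σ, (if v ∈ σ then (1:ℚ) else 0) • toQ v := by
      rw [hp]; apply Finset.sum_congr rfl; intro v hv; simp [hv]
    rw [this]
    exact cvec_spec hs hσ _ (fun u hu => by simp [hu]) u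
  intro v hv
  by_contra hvτ
  have e1 := (h1 v).symm.trans (h2 v)
  simp [hc'', Finset.mem_inter, hv, hvτ] at e1

variable (hcomp : F.IsComplete)

include hs hcomp

/-- Pigeonhole-limit: some cone contains `p` together with `p + ε t` for some `ε > 0`. -/
theorem cone_limit (p t : LatQ n) :
    ∃ τ ∈ F.cones, p ∈ ratCone τ ∧ ∃ ε : ℚ, 0 < ε ∧ p + ε • t ∈ ratCone τ := by
  classical
  have hex : ∀ k : ℕ, ∃ τ ∈ F.cones, p + ((k:ℚ)+1)⁻¹ • t ∈ ratCone τ := fun k => hcomp _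
  choose g hg hmem using hex
  obtain ⟨⟨τ, hτ⟩, hτinf⟩ :=
    Finite.exists_infinite_fiber (fun k => (⟨g k, hg k⟩ : {σ // σ ∈ F.cones}))
  have hinf : Set.Infinite {k : ℕ | g k = τ} := by
    refine (Set.infinite_coe_iff.1 hτinf).mono ?_
    intro k hk
    exact congrArg Subtype.val hk
  have H : ∀ δ : ℚ, 0 < δ → ∃ ε : ℚ, 0 < ε ∧ ε < δ ∧ p + ε • t ∈ ratCone τ := by
    intro δ hδ
    obtain ⟨N, hN⟩ := exists_nat_gt δ⁻¹
    obtain ⟨k, hk, hkN⟩ := hinf.exists_gt N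
    have hk1 : (0:ℚ) < (k:ℚ) + 1 := by positivity
    have h2 : δ⁻¹ < (k:ℚ) + 1 := by
      have : (N:ℚ) < (k:ℚ) := by exact_mod_cast hkN
      linarith
    refine ⟨((k:ℚ)+1)⁻¹, by positivity, inv_lt_of_inv_lt₀ hδ h2, ?_⟩
    have hgk : g k = τ := hk
    rw [← hgk]
    exact hmem k
  refine ⟨τ, hτ, mem_of_arb_small hs hτ p t H, ?_⟩
  obtain ⟨ε, hε, _, hm⟩ := H 1 one_pos
  exact ⟨ε, hε, hm⟩

/-- Every cone of the fan with fewer than `n` generators grows inside the fan. -/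
theorem exists_grow {σ : Finset (LatZ n)} (hσ : σ ∈ F.cones) (hlt : σ.card < n) :
    ∃ τ ∈ F.cones, σ ⊂ τ := by
  classical
  have hne : idxSet hs σ hσ ≠ Finset.univ := by
    intro h
    rw [← card_idxSet hs hσ, h] at hlt
    simp at hlt
  obtain ⟨i₀, hi₀⟩ : ∃ i₀, i₀ ∉ idxSet hs σ hσ := by
    by_contra hc
    push_neg at hc
    exact hne (Finset.eq_univ_iff_forall.2 hc)
  set p : LatQ n := ∑ v ∈ σ, toQ v with hp
  set t : LatQ n := toQ (bz hs σ hσ i₀) with ht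
  obtain ⟨τ, hτ, hpτ, ε, hε, hmτ⟩ := cone_limit hs hcomp p t
  have hsub : σ ⊆ τ := subset_of_bary_mem hs hσ hτ hpτ
  refine ⟨τ, hτ, hsub, ?_⟩
  intro hτσ
  -- then p + ε t ∈ ratCone σ, contradiction at coordinate i₀
  have hmem : p + ε • t ∈ ratCone σ := (ratCone_mono hτσ) hmτ
  obtain ⟨c, hc, hx⟩ := hmem
  have hb : bz hs σ hσ i₀ ∉ σ := fun h => hi₀ ((mem_idxSet hs hσ i₀).2 h)
  have h1 : (bq hs σ hσ).repr (p + ε • t) i₀ = 0 := by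
    rw [hx]
    have := congrFun (reprQ_spec hs hσ c) i₀
    rw [this]
    simp [hb]
  have h2 : (bq hs σ hσ).repr p i₀ = 0 := by
    have hpc : p = ∑ v ∈ σ, (1:ℚ) • toQ v := by simp [hp]
    rw [hpc]
    have := congrFun (reprQ_spec hs hσ (fun _ => (1:ℚ))) i₀
    rw [this]
    simp [hb]
  have h3 : (bq hs σ hσ).repr t i₀ = 1 := by
    rw [ht, ← bq_apply hs hσ i₀]
    simp
  rw [map_add, map_smul] at h1
  simp only [Finsupp.coe_add, Finsupp.coe_smul, Pi.add_apply, Pi.smul_apply, h2, h3,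
    smul_eq_mul, mul_one, zero_add] at h1
  exact (ne_of_gt hε) h1

/-- Every cone of the fan is contained in a maximal (full-dimensional) cone. -/
theorem exists_max_extend {σ : Finset (LatZ n)} (hσ : σ ∈ F.cones) :
    ∃ C ∈ F.cones, σ ⊆ C ∧ C.card = n := by
  classical
  suffices h : ∀ k : ℕ, ∀ σ : Finset (LatZ n), ∀ hσ : σ ∈ F.cones, n - σ.card ≤ k →
      ∃ C ∈ F.cones, σ ⊆ C ∧ C.card = n by
    exact h n σ hσ (Nat.sub_le _ _)
  intro k
  induction k with
  | zero =>
    intro σ hσ hk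
    have h1 : σ.card ≤ n := card_le_of_mem_cones hs hσ
    have h2 : n ≤ σ.card := Nat.le_of_sub_eq_zero (Nat.le_zero.1 hk)
    exact ⟨σ, hσ, Finset.Subset.refl σ, le_antisymm h1 h2⟩
  | succ k ih =>
    intro σ hσ hk
    by_cases hcard : σ.card = n
    · exact ⟨σ, hσ, Finset.Subset.refl σ, hcard⟩
    · have hlt : σ.card < n := lt_of_le_of_ne (card_le_of_mem_cones hs hσ) hcard
      obtain ⟨τ, hτ, hst⟩ := exists_grow hs hcomp hσ hlt
      obtain ⟨C, hC, hsub, hCcard⟩ := ih τ hτ (by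
        have := Finset.card_lt_card hst
        omega)
      exact ⟨C, hC, Finset.Subset.trans hst.1 hsub, hCcard⟩

/-- Every point lies in a maximal cone. -/
theorem exists_max_mem (x : LatQ n) :
    ∃ C ∈ F.cones, C.card = n ∧ x ∈ ratCone C := by
  obtain ⟨σ, hσ, hx⟩ := hcomp x
  obtain ⟨C, hC, hsub, hcard⟩ := exists_max_extend hs hcomp hσ
  exact ⟨C, hC, hcard, ratCone_mono hsub hx⟩

end Stmt0

namespace Stmt0

open Finset

variable {n : ℕ} {F : PreFan n} (hs : F.IsSmooth) (hcomp : F.IsComplete)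

theorem subset_gens {σ : Finset (LatZ n)} (hσ : σ ∈ F.cones) : σ ⊆ F.gens := by
  intro v hv
  have : σ ≤ F.cones.sup id := Finset.le_sup (f := id) hσ
  exact this hv

theorem cvec_finset_sum {σ : Finset (LatZ n)} (hσ : σ ∈ F.cones) {α : Type*}
    (s : Finset α) (g : α → LatQ n) (u : LatZ n) :
    cvec hs σ hσ (∑ a ∈ s, g a) u = ∑ a ∈ s, cvec hs σ hσ (g a) u := by
  classical
  induction s using Finset.induction with
  | empty => simp [cvec_zero]
  | insert _ _ h ih => rename_i a s; rw [Finset.sum_insert h, Finset.sum_insert h, cvec_add, ih]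

theorem cvec_neg {σ : Finset (LatZ n)} (hσ : σ ∈ F.cones) (y : LatQ n) (u : LatZ n) :
    cvec hs σ hσ (-y) u = - cvec hs σ hσ y u := by
  have : (-y) = (-1 : ℚ) • y := by funext i; simp
  rw [this, cvec_smul]; ring

include hs hcomp in
/-- Wall-crossing: given a maximal cone `C` and `v₀ ∈ C`, there is a maximal cone
`C'` on the other side of the wall `C.erase v₀`, together with the wall relation
`δ` and the coordinate change formula. -/
theorem wall_cross {C : Finset (LatZ n)} (hC : C ∈ F.cones) (hCn : C.card = n)
    {v₀ : LatZ n} (hv₀ : v₀ ∈ C) :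
    ∃ (w : LatZ n) (C' : Finset (LatZ n)) (hC' : C' ∈ F.cones) (δ : LatZ n → ℤ),
      C' = insert w (C.erase v₀) ∧ C'.card = n ∧ w ∉ C ∧
      IsInvCurveClass F (C.erase v₀) δ ∧ (δ v₀ = 1) ∧ (δ w = 1) ∧
      (∀ y : LatQ n, ∀ u : LatZ n,
        cvec hs C' hC' y u = cvec hs C hC y u - cvec hs C hC y v₀ * (δ u : ℚ)) := by
  classical
  set τ : Finset (LatZ n) := C.erase v₀ with hτdef
  have hτ : τ ∈ F.cones := F.downward C hC τ (Finset.erase_subset _ _)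
  have hτcard : τ.card + 1 = n := by
    rw [hτdef, Finset.card_erase_of_mem hv₀]
    have : 1 ≤ C.card := Finset.card_pos.2 ⟨v₀, hv₀⟩
    omega
  have hv₀τ : v₀ ∉ τ := Finset.notMem_erase _ _
  have hCins : insert v₀ τ = C := Finset.insert_erase hv₀
  -- the barycenter of τ and the direction -v₀
  set p : LatQ n := ∑ v ∈ τ, toQ v with hpdef
  set t : LatQ n := -toQ v₀ with htdef
  obtain ⟨σ₁, hσ₁, hpσ₁, ε, hε, hqσ₁⟩ := cone_limit hs hcomp p t
  obtain ⟨C'', hC'', hsub₁, hC''n⟩ := exists_max_extend hs hcomp hσ₁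
  have hpC'' : p ∈ ratCone C'' := ratCone_mono hsub₁ hpσ₁
  have hqC'' : p + ε • t ∈ ratCone C'' := ratCone_mono hsub₁ hqσ₁
  have hτC'' : τ ⊆ C'' := subset_of_bary_mem hs hτ hC'' hpC''
  -- coordinates of p in chart C
  have hcvp : ∀ u, cvec hs C hC p u = if u ∈ τ then 1 else 0 := by
    intro u
    have hrep : p = ∑ v ∈ C, (if v ∈ τ then (1:ℚ) else 0) • toQ v := by
      rw [hpdef, ← Finset.sum_subset (Finset.erase_subset v₀ C)]
      · apply Finset.sum_congr rfl; intro v hv; rw [if_pos hv, one_smul]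
      · intro v _ hv; rw [if_neg hv, zero_smul]
    rw [hrep]
    exact cvec_spec hs hC _ (fun u hu => if_neg (fun h => hu (Finset.erase_subset _ _ h))) u
  have hcvq : cvec hs C hC (p + ε • t) v₀ = -ε := by
    rw [cvec_add, cvec_smul, htdef, cvec_neg, cvec_gen hs hC hv₀]
    rw [hcvp v₀, if_neg hv₀τ]
    simp
  -- v₀ is not in C''
  have hv₀C'' : v₀ ∉ C'' := by
    intro hmem
    have hCC : C = C'' := by
      apply Finset.eq_of_subset_of_card_le
      · rw [← hCins]
        intro z hz
        rcases Finset.mem_insert.1 hz with h | h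
        · rwa [h]
        · exact hτC'' h
      · rw [hC''n, hCn]
    have hqC : p + ε • t ∈ ratCone C := by rw [hCC]; exact hqC''
    have h0 := (cvec_of_mem hs hC hqC).1 v₀ hv₀
    rw [hcvq] at h0
    linarith
  -- the new generator w
  obtain ⟨w, hwC'', hwτ⟩ : ∃ w, w ∈ C'' ∧ w ∉ τ := by
    by_contra hcon
    push_neg at hcon
    have hsub : C'' ⊆ τ := fun z hz => hcon z hz
    have := Finset.card_le_card hsub
    omega
  have hC''eq : C'' = insert w τ := by
    refine (Finset.eq_of_subset_of_card_le ?_ ?_).symm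
    · intro z hz
      rcases Finset.mem_insert.1 hz with h | h
      · rwa [h]
      · exact hτC'' h
    · rw [Finset.card_insert_of_notMem hwτ]
      omega
  have hwv₀ : w ≠ v₀ := fun h => hv₀C'' (h ▸ hwC'')
  have hwC : w ∉ C := by
    intro h
    rcases Finset.mem_insert.1 (by rw [hCins]; exact h : w ∈ insert v₀ τ) with h' | h'
    · exact hwv₀ h'
    · exact hwτ h'
  -- integral coordinates of w in the chart of C
  choose m hm using fun u => cvec_int hs hC w u
  -- transfer of the v₀-coordinate through C''
  have hkey : ∀ y : LatQ n, cvec hs C hC y v₀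
      = cvec hs C'' hC'' y w * cvec hs C hC (toQ w) v₀ := by
    intro y
    conv_lhs => rw [← sum_cvec hs hC'' hC''n y]
    rw [cvec_finset_sum]
    have h1 : ∀ u ∈ C'', cvec hs C hC (cvec hs C'' hC'' y u • toQ u) v₀
        = cvec hs C'' hC'' y u * cvec hs C hC (toQ u) v₀ := by
      intro u _
      rw [cvec_smul]
    rw [Finset.sum_congr rfl h1]
    have hLHS : ∀ φ : LatZ n → ℚ, ∑ x ∈ C'', φ x = φ w + ∑ x ∈ τ, φ x := by
      intro φ
      conv_lhs => rw [hC''eq]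
      exact Finset.sum_insert hwτ
    rw [hLHS]
    have h2 : ∀ u ∈ τ, cvec hs C'' hC'' y u * cvec hs C hC (toQ u) v₀ = 0 := by
      intro u hu
      rw [cvec_gen hs hC (Finset.erase_subset _ _ hu),
        if_neg (fun h => (Finset.ne_of_mem_erase hu) h.symm), mul_zero]
    rw [Finset.sum_congr rfl h2]
    simp
  -- m v₀ = -1
  have hd : cvec hs C hC (toQ w) v₀ = (m v₀ : ℚ) := hm v₀
  have hdneg : (m v₀ : ℚ) < 0 := by
    have h1 := hkey (p + ε • t)
    rw [hcvq, hd] at h1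
    have h2 : 0 ≤ cvec hs C'' hC'' (p + ε • t) w :=
      (cvec_of_mem hs hC'' hqC'').1 w hwC''
    nlinarith
  have hmv₀ : m v₀ = -1 := by
    have h1 := hkey (toQ v₀)
    rw [cvec_gen hs hC hv₀, if_pos rfl, hd] at h1
    obtain ⟨m', hm'⟩ := cvec_int hs hC'' v₀ w
    rw [hm'] at h1
    have h2 : m' * m v₀ = 1 := by exact_mod_cast h1.symm
    rcases (Int.eq_one_or_neg_one_of_mul_eq_one' h2) with ⟨_, h⟩ | ⟨_, h⟩
    · exfalso; rw [h] at hdneg; norm_num at hdneg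
    · exact h
  -- the key expression of w in the chart of C
  have hwkey : toQ w = (-1 : ℚ) • toQ v₀ + ∑ u ∈ τ, (m u : ℚ) • toQ u := by
    conv_lhs => rw [← sum_cvec hs hC hCn (toQ w)]
    have hCsplit : ∑ u ∈ C, cvec hs C hC (toQ w) u • toQ u
        = ∑ u ∈ insert v₀ τ, cvec hs C hC (toQ w) u • toQ u := by rw [hCins]
    rw [hCsplit, Finset.sum_insert hv₀τ, hd, hmv₀]
    push_cast
    congr 1
    apply Finset.sum_congr rfl
    intro u _
    rw [hm u]
  -- the wall relation δ
  set δ : LatZ n → ℤ := fun u =>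
    if u = v₀ then 1 else if u = w then 1 else if u ∈ τ then -(m u) else 0 with hδdef
  have hδv₀ : δ v₀ = 1 := by simp [hδdef]
  have hδw : δ w = 1 := by simp [hδdef, hwv₀]
  have hδτ : ∀ u ∈ τ, δ u = -(m u) := by
    intro u hu
    have h1 : u ≠ v₀ := Finset.ne_of_mem_erase hu
    have h2 : u ≠ w := fun h => hwτ (h ▸ hu)
    simp [hδdef, h1, h2, hu]
  have hδ0 : ∀ u, u ∉ insert v₀ (insert w τ) → δ u = 0 := by
    intro u hu
    simp only [Finset.mem_insert, not_or] at hu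
    simp [hδdef, hu.1, hu.2.1, hu.2.2]
  have hδsupp : ∀ u, δ u ≠ 0 → u ∈ insert v₀ (insert w τ) := by
    intro u h
    by_contra hc
    exact h (hδ0 u hc)
  -- the rational relation
  have hrelQ : (δ v₀ : ℚ) • toQ v₀ + ((δ w : ℚ) • toQ w
      + ∑ u ∈ τ, (δ u : ℚ) • toQ u) = 0 := by
    rw [hδv₀, hδw]
    have h3 : ∑ u ∈ τ, (δ u : ℚ) • toQ u = ∑ u ∈ τ, (-(m u : ℚ)) • toQ u := by
      apply Finset.sum_congr rfl
      intro u hu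
      rw [hδτ u hu]
      push_cast
      ring_nf
    have h4 : ∑ u ∈ τ, (m u : ℚ) • toQ u + ∑ u ∈ τ, (-(m u : ℚ)) • toQ u = 0 := by
      rw [← Finset.sum_add_distrib]
      apply Finset.sum_eq_zero
      intro u _
      rw [← add_smul]
      norm_num
    rw [h3, hwkey]
    linear_combination (norm := module) h4
  -- δ is a relation in A1
  have hv₀ins : v₀ ∉ insert w τ := by
    simp only [Finset.mem_insert, not_or]
    exact ⟨fun h => hwv₀ h.symm, hv₀τ⟩
  have hSgens : insert v₀ (insert w τ) ⊆ F.gens := by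
    intro z hz
    rcases Finset.mem_insert.1 hz with h | h
    · exact subset_gens hC (h ▸ hv₀)
    · rcases Finset.mem_insert.1 h with h' | h'
      · exact subset_gens hC'' (h' ▸ hwC'')
      · exact subset_gens hτ h'
  have hδA1 : δ ∈ F.A1 := by
    constructor
    · intro v hv
      exact hSgens (hδsupp v hv)
    · have hz : ∑ v ∈ F.gens, δ v • v = ∑ v ∈ insert v₀ (insert w τ), δ v • v := by
        rw [Finset.sum_subset hSgens]
        intro v _ hv
        rw [hδ0 v hv, zero_smul]
      rw [hz, Finset.sum_insert hv₀ins, Finset.sum_insert hwτ]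
      apply toQ_injective
      rw [toQ_zero, toQ_add, toQ_add, toQ_sum, toQ_zsmul, toQ_zsmul]
      have h5 : ∑ x ∈ τ, toQ (δ x • x) = ∑ u ∈ τ, (δ u : ℚ) • toQ u := by
        apply Finset.sum_congr rfl
        intro u _
        rw [toQ_zsmul]
      rw [h5]
      exact hrelQ
  have hicc : IsInvCurveClass F τ δ := by
    refine ⟨hτ, hτcard, hδA1, v₀, w, fun h => hwv₀ h.symm, hv₀τ, hwτ, ?_, ?_, hδv₀, hδw, hδsupp⟩
    · rw [hCins]; exact hC
    · rw [← hC''eq]; exact hC''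
  -- the coordinate change formula
  refine ⟨w, C'', hC'', δ, hC''eq, hC''n, hwC, hicc, hδv₀, hδw, ?_⟩
  intro y u
  set g : LatZ n → ℚ := fun z => cvec hs C hC y z - cvec hs C hC y v₀ * (δ z : ℚ) with hg
  have hgsupp : ∀ z, z ∉ C'' → g z = 0 := by
    intro z hz
    by_cases hzv : z = v₀
    · subst hzv
      simp [hg, hδv₀]
    · have hzw : z ≠ w := fun h => hz (h ▸ hwC'')
      have hzτ : z ∉ τ := fun h => hz (hτC'' h)
      have hzC : z ∉ C := by
        rw [← hCins]
        simp only [Finset.mem_insert, not_or]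
        exact ⟨hzv, hzτ⟩
      have hz0 : δ z = 0 := hδ0 z (by
        simp only [Finset.mem_insert, not_or]
        exact ⟨hzv, hzw, hzτ⟩)
      simp [hg, cvec_supported hs hC y hzC, hz0]
  have hgsum : ∑ z ∈ C'', g z • toQ z = y := by
    have hCsum : ∑ z ∈ C'', g z • toQ z = g w • toQ w + ∑ z ∈ τ, g z • toQ z := by
      conv_lhs => rw [hC''eq]
      exact Finset.sum_insert hwτ
    have hgw : g w = - cvec hs C hC y v₀ := by
      simp [hg, hδw, cvec_supported hs hC y hwC]
    have h9 : ∑ z ∈ τ, g z • toQ z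
        = ∑ z ∈ τ, cvec hs C hC y z • toQ z
          + cvec hs C hC y v₀ • (∑ z ∈ τ, (m z : ℚ) • toQ z) := by
      rw [Finset.smul_sum, ← Finset.sum_add_distrib]
      apply Finset.sum_congr rfl
      intro z hz
      have hgz : g z = cvec hs C hC y z + cvec hs C hC y v₀ * (m z : ℚ) := by
        rw [hg]
        simp only []
        rw [hδτ z hz]
        push_cast
        ring
      rw [hgz, add_smul, smul_smul]
    have hCsplit : ∀ φ : LatZ n → LatQ n, ∑ z ∈ C, φ z = φ v₀ + ∑ z ∈ τ, φ z := by
      intro φ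
      conv_lhs => rw [← hCins]
      exact Finset.sum_insert hv₀τ
    have h8 : y = cvec hs C hC y v₀ • toQ v₀ + ∑ z ∈ τ, cvec hs C hC y z • toQ z := by
      conv_lhs => rw [← sum_cvec hs hC hCn y]
      exact hCsplit _
    rw [hCsum, h9, hgw, hwkey]
    linear_combination (norm := module) -h8
  have huniq := cvec_spec hs hC'' g hgsupp u
  calc cvec hs C'' hC'' y u = cvec hs C'' hC'' (∑ z ∈ C'', g z • toQ z) u := by rw [hgsum]
    _ = g u := huniq
    _ = cvec hs C hC y u - cvec hs C hC y v₀ * (δ u : ℚ) := rfl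

end Stmt0

namespace Stmt0

open Finset

variable {n : ℕ} {F : PreFan n} (hs : F.IsSmooth) (hcomp : F.IsComplete)

/-! #### The cone spanned by the invariant curve classes -/

/-- The set of (rational) classes of invariant curves. -/
def WSet (F : PreFan n) : Set (LatZ n → ℚ) :=
  {g | ∃ τ δ, IsInvCurveClass F τ δ ∧ g = ratify δ}

theorem coneSpan_zero_mem (S : Set (LatZ n → ℚ)) : (0 : LatZ n → ℚ) ∈ coneSpan S :=
  ⟨0, (fun i => 0), (fun i => 0), fun i => le_refl 0, fun i => i.elim0, by simp⟩

theorem coneSpan_mem_of_gen {S : Set (LatZ n → ℚ)} {g : LatZ n → ℚ} (hg : g ∈ S) :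
    g ∈ coneSpan S :=
  ⟨1, (fun _ => 1), (fun _ => g), fun _ => zero_le_one, fun _ => hg, by simp⟩

theorem coneSpan_add_mem {S : Set (LatZ n → ℚ)} {a b : LatZ n → ℚ}
    (ha : a ∈ coneSpan S) (hb : b ∈ coneSpan S) : a + b ∈ coneSpan S := by
  obtain ⟨k₁, c₁, g₁, hc₁, hg₁, rfl⟩ := ha
  obtain ⟨k₂, c₂, g₂, hc₂, hg₂, rfl⟩ := hb
  refine ⟨k₁ + k₂, Fin.addCases c₁ c₂, Fin.addCases g₁ g₂, ?_, ?_, ?_⟩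
  · intro i
    induction i using Fin.addCases with
    | left j => simpa using hc₁ j
    | right j => simpa using hc₂ j
  · intro i
    induction i using Fin.addCases with
    | left j => simpa using hg₁ j
    | right j => simpa using hg₂ j
  · rw [Fin.sum_univ_add]
    congr 1
    · apply Finset.sum_congr rfl; intro j _; simp
    · apply Finset.sum_congr rfl; intro j _; simp

theorem coneSpan_smul_mem {S : Set (LatZ n → ℚ)} {a : LatZ n → ℚ} {q : ℚ} (hq : 0 ≤ q)
    (ha : a ∈ coneSpan S) : q • a ∈ coneSpan S := by
  obtain ⟨k, c, g, hc, hg, rfl⟩ := ha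
  refine ⟨k, fun i => q * c i, g, fun i => mul_nonneg hq (hc i), hg, ?_⟩
  rw [Finset.smul_sum]
  apply Finset.sum_congr rfl
  intro i _
  rw [smul_smul]

theorem coneSpan_mono {S T : Set (LatZ n → ℚ)} (h : S ⊆ T) :
    coneSpan S ⊆ coneSpan T := by
  rintro x ⟨k, c, g, hc, hg, rfl⟩
  exact ⟨k, c, g, hc, fun i => h (hg i), rfl⟩

theorem coneSpan_WSet_subset_NE (G : ToricGeom F) :
    coneSpan (WSet F) ⊆ G.NE := by
  apply coneSpan_mono
  rintro g ⟨τ, δ, h, rfl⟩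
  exact ⟨G.invCurve τ δ h, by rw [G.invCurve_class]⟩

end Stmt0

namespace Stmt0

open Finset

variable {n : ℕ} {F : PreFan n} (hs : F.IsSmooth) (hcomp : F.IsComplete)

theorem cvec_affine {σ : Finset (LatZ n)} (hσ : σ ∈ F.cones) (p x : LatQ n) (s t : ℚ)
    (v : LatZ n) :
    cvec hs σ hσ (p + t • (x - p)) v
      = cvec hs σ hσ (p + s • (x - p)) v + (t - s) * cvec hs σ hσ (x - p) v := by
  have hqe : p + t • (x - p) = (p + s • (x - p)) + (t - s) • (x - p) := by module
  rw [hqe, cvec_add, cvec_smul]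

/-- One step along the segment: the exit time of the current maximal cone. -/
theorem walk_step {C : Finset (LatZ n)} (hC : C ∈ F.cones) (hCn : C.card = n)
    (p x : LatQ n) (s : ℚ) (hs1 : s < 1)
    (inv1 : ∀ v ∈ C, 0 ≤ cvec hs C hC (p + s • (x - p)) v)
    (inv2 : ∀ v ∈ C, cvec hs C hC (p + s • (x - p)) v = 0 → 0 < cvec hs C hC (x - p) v) :
    ∃ T : ℚ, s < T ∧ T ≤ 1 ∧ (∀ v ∈ C, 0 ≤ cvec hs C hC (p + T • (x - p)) v) ∧
      (T < 1 → ∃ v₀ ∈ C, cvec hs C hC (x - p) v₀ < 0 ∧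
        cvec hs C hC (p + T • (x - p)) v₀ = 0) := by
  classical
  set R : Finset (LatZ n) := C.filter (fun v => cvec hs C hC (x - p) v < 0) with hRdef
  by_cases hRne : R.Nonempty
  · set r : LatZ n → ℚ :=
      fun v => s + (cvec hs C hC (p + s • (x-p)) v) / (-(cvec hs C hC (x-p) v)) with hrdef
    have hrgt : ∀ v ∈ R, s < r v := by
      intro v hv
      obtain ⟨hvC, hμ⟩ := Finset.mem_filter.1 hv
      have hval : 0 < cvec hs C hC (p + s • (x-p)) v := by
        rcases lt_or_eq_of_le (inv1 v hvC) with h | h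
        · exact h
        · exfalso; have := inv2 v hvC h.symm; linarith
      have hpos : 0 < cvec hs C hC (p+s•(x-p)) v / (-(cvec hs C hC (x-p) v)) :=
        div_pos hval (by linarith)
      rw [hrdef]
      simp only []
      linarith
    set T : ℚ := min 1 ((R.image r).min' (hRne.image r)) with hTdef
    have hsT : s < T := by
      rw [hTdef]
      apply lt_min hs1
      rw [Finset.lt_min'_iff]
      intro b hb
      obtain ⟨v, hv, rfl⟩ := Finset.mem_image.1 hb
      exact hrgt v hv
    have hT1 : T ≤ 1 := min_le_left _ _
    have hroot : ∀ v ∈ R, cvec hs C hC (p + (r v) • (x-p)) v = 0 := by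
      intro v hv
      obtain ⟨hvC, hμ⟩ := Finset.mem_filter.1 hv
      rw [cvec_affine hs hC p x s (r v) v, hrdef]
      simp only []
      have hμne : cvec hs C hC (x-p) v ≠ 0 := ne_of_lt hμ
      have hme : s + cvec hs C hC (p + s • (x-p)) v / -(cvec hs C hC (x-p) v) - s
          = cvec hs C hC (p + s • (x-p)) v / -(cvec hs C hC (x-p) v) := by ring
      rw [hme, div_mul_eq_mul_div, div_neg, mul_div_assoc, div_self hμne]
      ring
    have hTmem : ∀ v ∈ C, 0 ≤ cvec hs C hC (p + T • (x-p)) v := by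
      intro v hv
      rw [cvec_affine hs hC p x s T v]
      by_cases hμ : cvec hs C hC (x-p) v < 0
      · have hvR : v ∈ R := Finset.mem_filter.2 ⟨hv, hμ⟩
        have hle : T ≤ r v :=
          le_trans (min_le_right _ _) (Finset.min'_le _ _ (Finset.mem_image_of_mem r hvR))
        have h0 := hroot v hvR
        rw [cvec_affine hs hC p x s (r v) v] at h0
        nlinarith [mul_le_mul_of_nonpos_right (sub_le_sub_right hle s) (le_of_lt hμ)]
      · push_neg at hμ
        have h1 := inv1 v hv
        nlinarith [sub_pos.2 hsT]
    refine ⟨T, hsT, hT1, hTmem, ?_⟩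
    intro hTlt
    have hm' : (R.image r).min' (hRne.image r) < 1 := by
      by_contra hcon
      push_neg at hcon
      rw [hTdef, min_eq_left hcon] at hTlt
      exact lt_irrefl _ hTlt
    have hTeq : T = (R.image r).min' (hRne.image r) := by
      rw [hTdef, min_eq_right (le_of_lt hm')]
    obtain ⟨v₀, hv₀R, hrv₀⟩ := Finset.mem_image.1 (Finset.min'_mem (R.image r) (hRne.image r))
    obtain ⟨hv₀C, hμ₀⟩ := Finset.mem_filter.1 hv₀R
    refine ⟨v₀, hv₀C, hμ₀, ?_⟩
    rw [hTeq, ← hrv₀]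
    exact hroot v₀ hv₀R
  · refine ⟨1, hs1, le_refl 1, ?_, fun h => absurd h (lt_irrefl 1)⟩
    intro v hv
    have hμ : ¬ cvec hs C hC (x-p) v < 0 := by
      intro hμ
      exact hRne ⟨v, Finset.mem_filter.2 ⟨hv, hμ⟩⟩
    push_neg at hμ
    rw [cvec_affine hs hC p x s 1 v]
    have h1 := inv1 v hv
    nlinarith [sub_pos.2 hs1]

open Classical in
/-- The maximal cones met by the segment strictly after time `s`. -/
noncomputable def filterCones (F : PreFan n) (p x : LatQ n) (s : ℚ) :
    Finset (Finset (LatZ n)) :=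
  F.cones.filter (fun D => D.card = n ∧ ∃ t : ℚ, s < t ∧ t ≤ 1 ∧ (p + t • (x - p)) ∈ ratCone D)

theorem mem_filterCones {F : PreFan n} {p x : LatQ n} {s : ℚ} {D : Finset (LatZ n)} :
    D ∈ filterCones F p x s ↔ D ∈ F.cones ∧ D.card = n ∧
      ∃ t : ℚ, s < t ∧ t ≤ 1 ∧ (p + t • (x - p)) ∈ ratCone D := by
  classical
  simp [filterCones]

include hcomp in
/-- The wall-crossing walk from the cone `C` toward the point `x`. -/
theorem walk (x p : LatQ n)
    (hgen : ∀ (C : Finset (LatZ n)) (hC : C ∈ F.cones), C.card = n → ∀ v₀ ∈ C, ∀ v₁ ∈ C,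
      v₀ ≠ v₁ → ∀ t : ℚ, 0 < t → t < 1 →
      ¬(cvec hs C hC (p + t • (x - p)) v₀ = 0 ∧ cvec hs C hC (p + t • (x - p)) v₁ = 0)) :
    ∀ (N : ℕ) (C : Finset (LatZ n)) (hC : C ∈ F.cones), C.card = n → ∀ s : ℚ,
      0 ≤ s → s < 1 →
      (∀ v ∈ C, 0 ≤ cvec hs C hC (p + s • (x - p)) v) →
      (∀ v ∈ C, cvec hs C hC (p + s • (x - p)) v = 0 → 0 < cvec hs C hC (x - p) v) →
      (filterCones F p x s).card ≤ N →
      ∃ (A : Finset (LatZ n)) (hA : A ∈ F.cones), A.card = n ∧ x ∈ ratCone A ∧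
        (fun u => cvec hs A hA x u - cvec hs C hC x u) ∈ coneSpan (WSet F) := by
  intro N
  induction N with
  | zero =>
      intro C hC hCn s hs0 hs1 inv1 inv2 hcard
      exfalso
      obtain ⟨T, hsT, hT1, hTmem, _⟩ := walk_step hs hC hCn p x s hs1 inv1 inv2
      have hCin : C ∈ filterCones F p x s := mem_filterCones.2
        ⟨hC, hCn, T, hsT, hT1, (mem_max_iff hs hC hCn _).2 hTmem⟩
      have : 0 < (filterCones F p x s).card := Finset.card_pos.2 ⟨C, hCin⟩
      omega
  | succ N ih =>
      intro C hC hCn s hs0 hs1 inv1 inv2 hcard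
      obtain ⟨T, hsT, hT1, hTmem, hTlt⟩ := walk_step hs hC hCn p x s hs1 inv1 inv2
      have hx1 : x = p + (1:ℚ) • (x - p) := by module
      by_cases hT : T < 1
      · -- crossing
        obtain ⟨v₀, hv₀C, hμ₀, hzero₀⟩ := hTlt hT
        have h0T : 0 < T := lt_of_le_of_lt hs0 hsT
        have huniq : ∀ v ∈ C, v ≠ v₀ → 0 < cvec hs C hC (p + T • (x - p)) v := by
          intro v hv hne
          rcases lt_or_eq_of_le (hTmem v hv) with h | h
          · exact h
          · exact absurd ⟨hzero₀, h.symm⟩ (hgen C hC hCn v₀ hv₀C v hv (Ne.symm hne) T h0T hT)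
        obtain ⟨w, C', hC', δ, hC'eq, hC'n, hwC, hicc, hδv₀, hδw, hL5⟩ :=
          wall_cross hs hcomp hC hCn hv₀C
        have hτC : C.erase v₀ ⊆ C := Finset.erase_subset _ _
        have hmemC' : ∀ v ∈ C', v = w ∨ (v ∈ C ∧ v ≠ v₀) := by
          intro v hv
          rw [hC'eq] at hv
          rcases Finset.mem_insert.1 hv with h | h
          · exact Or.inl h
          · exact Or.inr ⟨hτC h, Finset.ne_of_mem_erase h⟩
        have inv1' : ∀ v ∈ C', 0 ≤ cvec hs C' hC' (p + T • (x - p)) v := by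
          intro v hv
          rw [hL5 (p + T • (x - p)) v, hzero₀, zero_mul, sub_zero]
          rcases hmemC' v hv with h | ⟨hvC, _⟩
          · rw [h, cvec_supported hs hC _ hwC]
          · exact hTmem v hvC
        have inv2' : ∀ v ∈ C', cvec hs C' hC' (p + T • (x - p)) v = 0 →
            0 < cvec hs C' hC' (x - p) v := by
          intro v hv hz
          rw [hL5 (p + T • (x - p)) v, hzero₀, zero_mul, sub_zero] at hz
          rw [hL5 (x - p) v]
          rcases hmemC' v hv with h | ⟨hvC, hne⟩
          · rw [h, cvec_supported hs hC _ hwC, hδw]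
            push_cast
            linarith
          · exact absurd hz (ne_of_gt (huniq v hvC hne))
        -- the measure decreases
        have hCin : C ∈ filterCones F p x s := mem_filterCones.2
          ⟨hC, hCn, T, hsT, hT1, (mem_max_iff hs hC hCn _).2 hTmem⟩
        have hCout : C ∉ filterCones F p x T := by
          intro hmem
          obtain ⟨_, _, t, hTt, ht1, hmemt⟩ := mem_filterCones.1 hmem
          have h1 := (cvec_of_mem hs hC hmemt).1 v₀ hv₀C
          rw [cvec_affine hs hC p x T t v₀, hzero₀, zero_add] at h1
          nlinarith [sub_pos.2 hTt]
        have hsubset : filterCones F p x T ⊆ filterCones F p x s := by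
          intro D hD
          obtain ⟨h1, h2, t, h3, h4, h5⟩ := mem_filterCones.1 hD
          exact mem_filterCones.2 ⟨h1, h2, t, lt_trans hsT h3, h4, h5⟩
        have hss : filterCones F p x T ⊂ filterCones F p x s :=
          (Finset.ssubset_iff_of_subset hsubset).2 ⟨C, hCin, hCout⟩
        have hcard' : (filterCones F p x T).card ≤ N := by
          have := Finset.card_lt_card hss
          omega
        obtain ⟨A, hA, hAn, hxA, hdiff⟩ :=
          ih C' hC' hC'n T (le_of_lt h0T) hT inv1' inv2' hcard'
        refine ⟨A, hA, hAn, hxA, ?_⟩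
        have hcoef : 0 ≤ - cvec hs C hC x v₀ := by
          have hxv : cvec hs C hC x v₀ = (1 - T) * cvec hs C hC (x - p) v₀ := by
            conv_lhs => rw [hx1]
            rw [cvec_affine hs hC p x T 1 v₀, hzero₀, zero_add]
          rw [hxv]
          nlinarith [sub_pos.2 hT]
        have heq : (fun u => cvec hs A hA x u - cvec hs C hC x u)
            = (fun u => cvec hs A hA x u - cvec hs C' hC' x u)
              + (- cvec hs C hC x v₀) • ratify δ := by
          funext u
          simp only [Pi.add_apply, Pi.smul_apply, smul_eq_mul, ratify]
          rw [hL5 x u]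
          ring
        rw [heq]
        exact coneSpan_add_mem hdiff
          (coneSpan_smul_mem hcoef (coneSpan_mem_of_gen ⟨_, δ, hicc, rfl⟩))
      · -- arrival: T = 1
        push_neg at hT
        have hTeq : T = 1 := le_antisymm hT1 hT
        have hxC : x ∈ ratCone C := by
          rw [hx1, ← hTeq]
          exact (mem_max_iff hs hC hCn _).2 hTmem
        refine ⟨C, hC, hCn, hxC, ?_⟩
        have : (fun u => cvec hs C hC x u - cvec hs C hC x u) = (0 : LatZ n → ℚ) := by
          funext u; exact sub_self _
        rw [this]
        exact coneSpan_zero_mem _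

end Stmt0

namespace Stmt0

open Finset Polynomial

variable {n : ℕ} {F : PreFan n} (hs : F.IsSmooth)

/-- The separating functional attached to a triple (cone, pair of its generators). -/
noncomputable def psiFn (x : LatQ n) (j : Finset (LatZ n) × LatZ n × LatZ n) :
    LatQ n → ℚ :=
  if hC : j.1 ∈ F.cones then
    (if cvec hs j.1 hC x j.2.1 = 0 ∧ cvec hs j.1 hC x j.2.2 = 0 then
      fun y => cvec hs j.1 hC y j.2.1
    else
      fun y => cvec hs j.1 hC y j.2.1 * cvec hs j.1 hC x j.2.2
        - cvec hs j.1 hC y j.2.2 * cvec hs j.1 hC x j.2.1)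
  else 0

theorem psiFn_lin (x : LatQ n) (j : Finset (LatZ n) × LatZ n × LatZ n)
    (c : Fin n → ℚ) (g : Fin n → LatQ n) :
    psiFn hs x j (∑ i, c i • g i) = ∑ i, c i * psiFn hs x j (g i) := by
  classical
  rw [psiFn]
  by_cases hC : j.1 ∈ F.cones
  · rw [dif_pos hC]
    by_cases hcase : cvec hs j.1 hC x j.2.1 = 0 ∧ cvec hs j.1 hC x j.2.2 = 0
    · rw [if_pos hcase]
      try beta_reduce
      rw [cvec_finset_sum hs hC]
      apply Finset.sum_congr rfl
      intro i _
      rw [cvec_smul]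
    · rw [if_neg hcase]
      try beta_reduce
      rw [cvec_finset_sum hs hC, cvec_finset_sum hs hC, Finset.sum_mul, Finset.sum_mul,
        ← Finset.sum_sub_distrib]
      apply Finset.sum_congr rfl
      intro i _
      rw [cvec_smul, cvec_smul]
      ring
  · rw [dif_neg hC]
    simp [psiFn, dif_neg hC]

theorem exists_generic {B : Finset (LatZ n)} (hB : B ∈ F.cones) (hBn : B.card = n)
    (x : LatQ n) :
    ∃ p : LatQ n, (∀ v ∈ B, 0 < cvec hs B hB p v) ∧
      ∀ (C : Finset (LatZ n)) (hC : C ∈ F.cones), C.card = n → ∀ v₀ ∈ C, ∀ v₁ ∈ C,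
        v₀ ≠ v₁ → ∀ t : ℚ, 0 < t → t < 1 →
        ¬(cvec hs C hC (p + t • (x - p)) v₀ = 0 ∧ cvec hs C hC (p + t • (x - p)) v₁ = 0) := by
  classical
  -- polynomials attached to the triples
  set P : Finset (LatZ n) × LatZ n × LatZ n → ℚ[X] :=
    fun j => ∑ i : Fin n, Polynomial.C (psiFn hs x j (bq hs B hB i)) * X ^ (i : ℕ) with hP
  set TS : Finset (Finset (LatZ n) × LatZ n × LatZ n) :=
    F.cones ×ˢ (F.gens ×ˢ F.gens) with hTS
  set Bad : Finset ℚ :=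
    (TS.filter (fun j => P j ≠ 0)).biUnion (fun j => (P j).roots.toFinset) with hBad
  -- a positive parameter avoiding the bad set
  obtain ⟨t₀, ht₀⟩ : ∃ t₀ : ℚ, 0 < t₀ ∧ t₀ ∉ Bad := by
    have hinf : (Set.Ioi (0:ℚ)).Infinite := Set.Ioi_infinite 0
    obtain ⟨t₀, ht₀⟩ := (hinf.diff (Bad.finite_toSet)).nonempty
    exact ⟨t₀, ht₀.1, fun h => ht₀.2 (by simpa using h)⟩
  obtain ⟨ht₀pos, ht₀Bad⟩ := ht₀
  -- the generic point
  set p : LatQ n := ∑ i : Fin n, (t₀ ^ (i : ℕ)) • bq hs B hB i with hp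
  have hrepr : ⇑((bq hs B hB).repr p) = fun i : Fin n => t₀ ^ (i : ℕ) := by
    rw [hp]; exact Module.Basis.repr_sum_self _ _
  have hψeval : ∀ j, psiFn hs x j p = (P j).eval t₀ := by
    intro j
    rw [hp, psiFn_lin, hP]
    simp only [eval_finset_sum, eval_mul, eval_C, eval_pow, eval_X]
    apply Finset.sum_congr rfl
    intro i _
    ring
  refine ⟨p, ?_, ?_⟩
  · intro v hv
    have : cvec hs B hB p v = t₀ ^ ((idx hs hB hv : Fin n) : ℕ) := by
      simp only [cvec, dif_pos hv]
      rw [hrepr]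
    rw [this]
    exact pow_pos ht₀pos _
  · intro C hC hCn v₀ hv₀ v₁ hv₁ hne t ht0 ht1 hboth
    set j : Finset (LatZ n) × LatZ n × LatZ n := (C, v₀, v₁) with hj
    have hjTS : j ∈ TS := by
      rw [hTS, hj]
      rw [Finset.mem_product]
      refine ⟨hC, ?_⟩
      rw [Finset.mem_product]
      exact ⟨subset_gens hC hv₀, subset_gens hC hv₁⟩
    -- the functional vanishes at p
    have hseg : ∀ v, cvec hs C hC (p + t • (x - p)) v
        = cvec hs C hC p v + t * (cvec hs C hC x v - cvec hs C hC p v) := by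
      intro v
      rw [cvec_add, cvec_smul, cvec_sub]
    have hψ0 : psiFn hs x j p = 0 := by
      rw [psiFn, dif_pos hC]
      simp only [hj]
      obtain ⟨hz₀, hz₁⟩ := hboth
      rw [hseg v₀] at hz₀
      rw [hseg v₁] at hz₁
      by_cases hcase : cvec hs C hC x v₀ = 0 ∧ cvec hs C hC x v₁ = 0
      · rw [if_pos hcase]
        try beta_reduce
        rw [hcase.1] at hz₀
        have h1t : 1 - t ≠ 0 := by linarith
        have : (1 - t) * cvec hs C hC p v₀ = 0 := by linarith
        exact (mul_eq_zero.1 this).resolve_left h1t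
      · rw [if_neg hcase]
        try beta_reduce
        have h1t : 1 - t ≠ 0 := by linarith
        have hkey : (1 - t) * (cvec hs C hC p v₀ * cvec hs C hC x v₁
            - cvec hs C hC p v₁ * cvec hs C hC x v₀) = 0 := by
          linear_combination cvec hs C hC x v₁ * hz₀ - cvec hs C hC x v₀ * hz₁
        exact (mul_eq_zero.1 hkey).resolve_left h1t
    -- but the polynomial is nonzero
    have hwit : ∃ z : LatZ n, psiFn hs x j (toQ z) ≠ 0 := by
      rw [psiFn, dif_pos hC]
      simp only [hj]
      by_cases hcase : cvec hs C hC x v₀ = 0 ∧ cvec hs C hC x v₁ = 0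
      · rw [if_pos hcase]
        refine ⟨v₀, ?_⟩
        try beta_reduce
        rw [cvec_gen hs hC hv₀, if_pos rfl]
        norm_num
      · rw [if_neg hcase]
        push_neg at hcase
        by_cases hX₁ : cvec hs C hC x v₁ = 0
        · have hX₀ : cvec hs C hC x v₀ ≠ 0 := fun h => hcase h hX₁
          refine ⟨v₁, ?_⟩
          try beta_reduce
          rw [cvec_gen hs hC hv₁ v₀, cvec_gen hs hC hv₁ v₁, if_neg hne, if_pos rfl]
          simpa using hX₀
        · refine ⟨v₀, ?_⟩
          try beta_reduce
          rw [cvec_gen hs hC hv₀ v₀, cvec_gen hs hC hv₀ v₁, if_pos rfl, if_neg (Ne.symm hne)]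
          simpa using hX₁
    -- hence the polynomial attached to the triple is nonzero
    have hPne : P j ≠ 0 := by
      obtain ⟨z, hz⟩ := hwit
      rw [← Module.Basis.sum_repr (bq hs B hB) (toQ z)] at hz
      rw [psiFn_lin] at hz
      obtain ⟨i₀, hi₀⟩ : ∃ i, psiFn hs x j (bq hs B hB i) ≠ 0 := by
        by_contra hall
        push_neg at hall
        apply hz
        apply Finset.sum_eq_zero
        intro i _
        rw [hall i, mul_zero]
      intro hP0
      have hcoeff : (P j).coeff (i₀ : ℕ) = psiFn hs x j (bq hs B hB i₀) := by
        rw [hP]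
        try beta_reduce
        rw [Polynomial.finset_sum_coeff]
        rw [Finset.sum_eq_single i₀]
        · rw [coeff_C_mul, coeff_X_pow, if_pos rfl, mul_one]
        · intro b _ hbne
          rw [coeff_C_mul, coeff_X_pow,
            if_neg (fun h => hbne (Fin.val_injective h).symm), mul_zero]
        · intro h
          exact absurd (Finset.mem_univ i₀) h
      rw [hP0] at hcoeff
      simp only [coeff_zero] at hcoeff
      exact hi₀ hcoeff.symm
    -- but t₀ is not a root of it
    have hroot : ¬ (P j).IsRoot t₀ := by
      intro hr
      apply ht₀Bad
      rw [hBad]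
      apply Finset.mem_biUnion.2
      exact ⟨j, Finset.mem_filter.2 ⟨hjTS, hPne⟩,
        Multiset.mem_toFinset.2 (Polynomial.mem_roots'.2 ⟨hPne, hr⟩)⟩
    exact hroot (by rw [Polynomial.IsRoot, ← hψeval j, hψ0])

end Stmt0

namespace Stmt0

open Finset

variable {n : ℕ} {F : PreFan n} (hs : F.IsSmooth) (hcomp : F.IsComplete)

include hcomp in
/-- Main comparison: coordinate vectors of `x` in two maximal cones, one containing `x`,
differ by an effective combination of invariant curve classes. -/
theorem cvec_diff_mem {A B : Finset (LatZ n)} (hA : A ∈ F.cones) (hAn : A.card = n)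
    (hB : B ∈ F.cones) (hBn : B.card = n) {x : LatQ n} (hx : x ∈ ratCone A) :
    (fun u => cvec hs A hA x u - cvec hs B hB x u) ∈ coneSpan (WSet F) := by
  obtain ⟨p, hppos, hgen⟩ := exists_generic hs hB hBn x
  have h0 : p + (0:ℚ) • (x - p) = p := by module
  have inv1 : ∀ v ∈ B, 0 ≤ cvec hs B hB (p + (0:ℚ) • (x - p)) v := by
    intro v hv
    rw [h0]
    exact (hppos v hv).le
  have inv2 : ∀ v ∈ B, cvec hs B hB (p + (0:ℚ) • (x - p)) v = 0 →
      0 < cvec hs B hB (x - p) v := by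
    intro v hv hz
    rw [h0] at hz
    exact absurd hz (ne_of_gt (hppos v hv))
  obtain ⟨A', hA', hA'n, hxA', hdiff⟩ := walk hs hcomp x p hgen
    (filterCones F p x 0).card B hB hBn 0 le_rfl one_pos inv1 inv2 le_rfl
  have hshare : cvec hs A hA x = cvec hs A' hA' x := cvec_share hs hA hA' hx hxA'
  have heq : (fun u => cvec hs A hA x u - cvec hs B hB x u)
      = (fun u => cvec hs A' hA' x u - cvec hs B hB x u) := by
    funext u
    rw [hshare]
  rw [heq]
  exact hdiff

include hs hcomp in
theorem gen_mem_max {x₀ : LatZ n} (hx : x₀ ∈ F.gens) :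
    ∃ (C : Finset (LatZ n)) (hC : C ∈ F.cones), C.card = n ∧ x₀ ∈ C := by
  obtain ⟨σ, hσ, hxσ⟩ := Finset.mem_sup.1 hx
  obtain ⟨C, hC, hsub, hcard⟩ := exists_max_extend hs hcomp hσ
  exact ⟨C, hC, hcard, hsub hxσ⟩

include hcomp in
/-- Representation induction: a nonnegative representation of a point of a maximal cone
differs from the coordinate representation by an effective combination. -/
theorem rep_mem : ∀ (N : ℕ) (c : LatZ n → ℚ), (∀ v, c v ≠ 0 → v ∈ F.gens) →
    (∀ v, 0 ≤ c v) →
    ∀ (A : Finset (LatZ n)) (hA : A ∈ F.cones), A.card = n →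
    ∀ y : LatQ n, y = ∑ v ∈ F.gens, c v • toQ v → y ∈ ratCone A →
    (F.gens.filter (fun v => c v ≠ 0)).card ≤ N →
    (fun u => c u - cvec hs A hA y u) ∈ coneSpan (WSet F) := by
  classical
  intro N
  induction N with
  | zero =>
      intro c hsupp hnn A hA hAn y hy hyA hcard
      have hc0 : ∀ v, c v = 0 := by
        intro v
        by_contra hne
        have hvg : v ∈ F.gens := hsupp v hne
        have : v ∈ F.gens.filter (fun v => c v ≠ 0) := Finset.mem_filter.2 ⟨hvg, hne⟩
        have := Finset.card_pos.2 ⟨v, this⟩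
        omega
      have hy0 : y = 0 := by
        rw [hy]
        apply Finset.sum_eq_zero
        intro v _
        rw [hc0 v, zero_smul]
      have : (fun u => c u - cvec hs A hA y u) = (0 : LatZ n → ℚ) := by
        funext u
        rw [hc0 u, hy0, cvec_zero]
        simp
      rw [this]
      exact coneSpan_zero_mem _
  | succ N ih =>
      intro c hsupp hnn A hA hAn y hy hyA hcard
      by_cases hne : (F.gens.filter (fun v => c v ≠ 0)).Nonempty
      · obtain ⟨x₀, hx₀⟩ := hne
        obtain ⟨hx₀g, hc₀⟩ := Finset.mem_filter.1 hx₀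
        have ht : 0 < c x₀ := lt_of_le_of_ne (hnn x₀) (Ne.symm hc₀)
        set c' : LatZ n → ℚ := Function.update c x₀ 0 with hc'
        have hc'app : ∀ v, c' v = if v = x₀ then 0 else c v := by
          intro v
          rw [hc', Function.update_apply]
        set y' : LatQ n := ∑ v ∈ F.gens, c' v • toQ v with hy'
        have hyy' : y = y' + (c x₀) • toQ x₀ := by
          rw [hy, hy']
          rw [← Finset.add_sum_erase _ _ hx₀g, ← Finset.add_sum_erase _ _ hx₀g]
          have h1 : c' x₀ • toQ x₀ = 0 := by rw [hc'app]; simp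
          have h2 : ∑ v ∈ F.gens.erase x₀, c' v • toQ v
              = ∑ v ∈ F.gens.erase x₀, c v • toQ v := by
            apply Finset.sum_congr rfl
            intro v hv
            rw [hc'app, if_neg (Finset.ne_of_mem_erase hv)]
          rw [h1, h2]
          abel
        obtain ⟨B, hB, hBn, hy'B⟩ := exists_max_mem hs hcomp y'
        have hsupp' : ∀ v, c' v ≠ 0 → v ∈ F.gens := by
          intro v hv
          rw [hc'app] at hv
          by_cases h : v = x₀
          · rw [if_pos h] at hv; exact absurd rfl hv
          · rw [if_neg h] at hv; exact hsupp v hv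
        have hnn' : ∀ v, 0 ≤ c' v := by
          intro v
          rw [hc'app]
          split
          · exact le_refl 0
          · exact hnn v
        have hfilter : F.gens.filter (fun v => c' v ≠ 0)
            = (F.gens.filter (fun v => c v ≠ 0)).erase x₀ := by
          apply Finset.ext
          intro v
          rw [Finset.mem_erase, Finset.mem_filter, Finset.mem_filter, hc'app]
          constructor
          · rintro ⟨h1, h2⟩
            by_cases h : v = x₀
            · rw [if_pos h] at h2; exact absurd rfl h2
            · rw [if_neg h] at h2; exact ⟨h, h1, h2⟩
          · rintro ⟨h1, h2, h3⟩
            rw [if_neg h1]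
            exact ⟨h2, h3⟩
        have hcard' : (F.gens.filter (fun v => c' v ≠ 0)).card ≤ N := by
          rw [hfilter, Finset.card_erase_of_mem hx₀]
          omega
        have hg₁ := ih c' hsupp' hnn' B hB hBn y' rfl hy'B hcard'
        obtain ⟨C₀, hC₀, hC₀n, hx₀C₀⟩ := gen_mem_max hs hcomp hx₀g
        have hg₂ := cvec_diff_mem hs hcomp hC₀ hC₀n hA hAn (gen_mem_ratCone hx₀C₀)
        have hg₃ := cvec_diff_mem hs hcomp hB hBn hA hAn hy'B
        have heq : (fun u => c u - cvec hs A hA y u)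
            = (fun u => c' u - cvec hs B hB y' u)
              + ((c x₀) • (fun u => cvec hs C₀ hC₀ (toQ x₀) u - cvec hs A hA (toQ x₀) u)
              + (fun u => cvec hs B hB y' u - cvec hs A hA y' u)) := by
          funext u
          simp only [Pi.add_apply, Pi.smul_apply, smul_eq_mul]
          have hyeq : cvec hs A hA y u
              = cvec hs A hA y' u + c x₀ * cvec hs A hA (toQ x₀) u := by
            rw [hyy', cvec_add, cvec_smul]
          rw [hyeq, hc'app]
          rw [cvec_gen hs hC₀ hx₀C₀ u]
          by_cases h : u = x₀
          · rw [if_pos h, if_pos h, h]; ring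
          · rw [if_neg h, if_neg h]; ring
        rw [heq]
        exact coneSpan_add_mem hg₁ (coneSpan_add_mem (coneSpan_smul_mem ht.le hg₂) hg₃)
      · rw [Finset.not_nonempty_iff_eq_empty] at hne
        exact ih c hsupp hnn A hA hAn y hy hyA (by rw [hne]; simp)

end Stmt0

namespace Stmt0

open Finset

variable {n : ℕ} {F : PreFan n}

/-- Conjunct 2: an upper convex support function has nonnegative intersection with `γ`. -/
theorem conj2 (hcomp : F.IsComplete) {γ : LatZ n → ℤ} (hγ : γ ∈ F.A1)
    {σ : Finset (LatZ n)} (hσ : σ ∈ F.cones)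
    (hneg : ∀ u, γ u < 0 → u ∈ σ) (hpos : ∀ y ∈ σ, γ y < 0)
    (f : LatQ n → ℚ) (hsf : IsSupportFn F f) (hconv : IsUpperConvex f) :
    0 ≤ -∑ v ∈ F.gens, f (toQ v) * (γ v : ℚ) := by
  classical
  -- f vanishes at 0
  have hf0 : f 0 = 0 := by
    obtain ⟨l, hl⟩ := hsf σ hσ
    rw [hl 0 (zero_mem_ratCone σ), map_zero]
  -- positive homogeneity
  have hhom : ∀ (q : ℚ), 0 ≤ q → ∀ x : LatQ n, f (q • x) = q * f x := by
    intro q hq x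
    obtain ⟨σ', hσ', hx⟩ := hcomp x
    obtain ⟨l, hl⟩ := hsf σ' hσ'
    rw [hl x hx, hl (q • x) (smul_mem_ratCone hq hx), map_smul]
    simp
  -- superadditivity on finite sums
  have hsum : ∀ {α : Type} (s : Finset α) (g : α → LatQ n),
      ∑ a ∈ s, f (g a) ≤ f (∑ a ∈ s, g a) := by
    intro α s g
    induction s using Finset.induction with
    | empty => simp [hf0]
    | insert _ _ h ih =>
        rename_i a s
        rw [Finset.sum_insert h, Finset.sum_insert h]
        calc f (g a) + ∑ x ∈ s, f (g x) ≤ f (g a) + f (∑ x ∈ s, g x) := by linarith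
          _ ≤ f (g a + ∑ x ∈ s, g x) := hconv _ _
  have hcomb : ∀ (s : Finset (LatZ n)) (c : LatZ n → ℚ), (∀ a ∈ s, 0 ≤ c a) →
      ∑ a ∈ s, c a * f (toQ a) ≤ f (∑ a ∈ s, c a • toQ a) := by
    intro s c hc
    have h1 : ∀ a ∈ s, c a * f (toQ a) = f (c a • toQ a) := by
      intro a ha
      rw [hhom (c a) (hc a ha)]
    rw [Finset.sum_congr rfl h1]
    exact hsum s _
  -- linearity on the cone σ
  have hlin : ∀ (c : LatZ n → ℚ), (∀ v ∈ σ, 0 ≤ c v) →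
      f (∑ v ∈ σ, c v • toQ v) = ∑ v ∈ σ, c v * f (toQ v) := by
    intro c hc
    obtain ⟨l, hl⟩ := hsf σ hσ
    rw [hl _ (mem_ratCone_of_coeffs c hc rfl), map_sum]
    apply Finset.sum_congr rfl
    intro v hv
    rw [map_smul, hl (toQ v) (gen_mem_ratCone hv)]
    simp
  -- the two halves of the relation
  set Pos : Finset (LatZ n) := F.gens.filter (fun v => 0 < γ v) with hPos
  have hNeg : ∀ v ∈ F.gens, v ∉ Pos → γ v < 0 → v ∈ σ := fun v _ _ h => hneg v h
  have hσg : σ ⊆ F.gens := subset_gens hσ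
  have hσPos : ∀ v ∈ σ, v ∉ Pos := by
    intro v hv hmem
    have := (Finset.mem_filter.1 hmem).2
    have := hpos v hv
    omega
  have hPosσ : Disjoint Pos σ := by
    rw [Finset.disjoint_right]
    intro v hv
    exact fun hmem => hσPos v hv hmem
  -- split a sum over gens into Pos and σ parts
  have hsplit : ∀ {M : Type} [AddCommMonoid M] (g : LatZ n → M),
      (∀ v ∈ F.gens, γ v = 0 → g v = 0) →
      ∑ v ∈ F.gens, g v = ∑ v ∈ Pos, g v + ∑ v ∈ σ, g v := by
    intro M _ g hg
    rw [← Finset.sum_union hPosσ]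
    apply (Finset.sum_subset ?_ ?_).symm
    · apply Finset.union_subset
      · exact Finset.filter_subset _ _
      · exact hσg
    · intro v hv hvn
      rw [Finset.mem_union] at hvn
      push_neg at hvn
      apply hg v hv
      have h1 : ¬ 0 < γ v := by
        intro h
        exact hvn.1 (Finset.mem_filter.2 ⟨hv, h⟩)
      have h2 : ¬ γ v < 0 := fun h => hvn.2 (hneg v h)
      omega
  -- the rational relation
  have hrelQ : ∑ v ∈ F.gens, (γ v : ℚ) • toQ v = 0 := by
    have h0 := congrArg toQ hγ.2
    rw [toQ_sum, toQ_zero] at h0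
    rw [← h0]
    apply Finset.sum_congr rfl
    intro v _
    rw [toQ_zsmul]
  have hZ : ∑ v ∈ Pos, (γ v : ℚ) • toQ v = ∑ v ∈ σ, ((-γ v : ℤ) : ℚ) • toQ v := by
    have h1 := hsplit (fun v => (γ v : ℚ) • toQ v) (fun v _ h => by simp [h])
    rw [hrelQ] at h1
    have h2 : ∑ v ∈ σ, ((-γ v : ℤ) : ℚ) • toQ v = - ∑ v ∈ σ, (γ v : ℚ) • toQ v := by
      rw [← Finset.sum_neg_distrib]
      apply Finset.sum_congr rfl
      intro v _
      push_cast
      rw [neg_smul]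
    rw [h2]
    exact eq_neg_of_add_eq_zero_left h1.symm
  -- the chain of inequalities
  have hchain : ∑ v ∈ Pos, (γ v : ℚ) * f (toQ v)
      ≤ ∑ v ∈ σ, ((-γ v : ℤ) : ℚ) * f (toQ v) := by
    calc ∑ v ∈ Pos, (γ v : ℚ) * f (toQ v)
        ≤ f (∑ v ∈ Pos, (γ v : ℚ) • toQ v) := by
          apply hcomb
          intro v hv
          have := (Finset.mem_filter.1 hv).2
          positivity
      _ = f (∑ v ∈ σ, ((-γ v : ℤ) : ℚ) • toQ v) := by rw [hZ]
      _ = ∑ v ∈ σ, ((-γ v : ℤ) : ℚ) * f (toQ v) := by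
          apply hlin
          intro v hv
          have := hpos v hv
          have : (0:ℤ) ≤ -γ v := by omega
          exact_mod_cast this
  have hfs : ∑ v ∈ F.gens, f (toQ v) * (γ v : ℚ)
      = ∑ v ∈ Pos, f (toQ v) * (γ v : ℚ) + ∑ v ∈ σ, f (toQ v) * (γ v : ℚ) :=
    hsplit _ (fun v _ h => by simp [h])
  have e1 : ∑ v ∈ Pos, f (toQ v) * (γ v : ℚ) = ∑ v ∈ Pos, (γ v : ℚ) * f (toQ v) := by
    apply Finset.sum_congr rfl
    intro v _
    ring
  have e2 : ∑ v ∈ σ, f (toQ v) * (γ v : ℚ)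
      = - ∑ v ∈ σ, ((-γ v : ℤ) : ℚ) * f (toQ v) := by
    rw [← Finset.sum_neg_distrib]
    apply Finset.sum_congr rfl
    intro v _
    push_cast
    ring
  rw [hfs, e1, e2]
  linarith

end Stmt0

namespace Stmt0

open Finset

variable {n : ℕ} {F : PreFan n}

/-- Conjunct 1: the class of the relation lies in the Mori cone. -/
theorem conj1 (hs : F.IsSmooth) (hcomp : F.IsComplete) (G : ToricGeom F)
    {γ : LatZ n → ℤ} (hγ : γ ∈ F.A1) {σ : Finset (LatZ n)} (hσ : σ ∈ F.cones)
    (hneg : ∀ u, γ u < 0 → u ∈ σ) (hpos : ∀ y ∈ σ, γ y < 0) :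
    ratify γ ∈ G.NE := by
  classical
  set c : LatZ n → ℚ := fun v => if 0 ≤ γ v then (γ v : ℚ) else 0 with hc
  have hsupp : ∀ v, c v ≠ 0 → v ∈ F.gens := by
    intro v hv
    apply hγ.1
    intro h0
    apply hv
    simp [hc, h0]
  have hnn : ∀ v, 0 ≤ c v := by
    intro v
    simp only [hc]
    split
    · exact_mod_cast ‹0 ≤ γ v›
    · exact le_refl 0
  have hσg : σ ⊆ F.gens := subset_gens hσ
  set y : LatQ n := ∑ v ∈ F.gens, c v • toQ v with hy
  have hrelQ : ∑ v ∈ F.gens, (γ v : ℚ) • toQ v = 0 := by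
    have h0 := congrArg toQ hγ.2
    rw [toQ_sum, toQ_zero] at h0
    rw [← h0]
    apply Finset.sum_congr rfl
    intro v _
    rw [toQ_zsmul]
  have hyZ : y = ∑ v ∈ σ, ((-γ v : ℤ) : ℚ) • toQ v := by
    have h1 : ∀ v ∈ F.gens, c v • toQ v
        = (γ v : ℚ) • toQ v + (if v ∈ σ then ((-γ v : ℤ) : ℚ) • toQ v else 0) := by
      intro v _
      by_cases hvσ : v ∈ σ
      · have hneg' := hpos v hvσ
        rw [if_pos hvσ]
        simp only [hc]
        rw [if_neg (by omega : ¬ (0:ℤ) ≤ γ v)]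
        push_cast
        rw [neg_smul, zero_smul]
        abel
      · have hge : 0 ≤ γ v := by
          by_contra h
          push_neg at h
          exact hvσ (hneg v h)
        rw [if_neg hvσ]
        simp only [hc]
        rw [if_pos hge, add_zero]
    rw [hy, Finset.sum_congr rfl h1, Finset.sum_add_distrib, hrelQ, zero_add]
    rw [Finset.sum_ite_mem]
    rw [Finset.inter_eq_right.2 hσg]
  have hyσ : y ∈ ratCone σ := by
    refine mem_ratCone_of_coeffs _ (fun v hv => ?_) hyZ
    have := hpos v hv
    exact_mod_cast (by omega : (0:ℤ) ≤ -γ v)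
  obtain ⟨A, hA, hsub, hAn⟩ := exists_max_extend hs hcomp hσ
  have hyA : y ∈ ratCone A := ratCone_mono hsub hyσ
  have hcvecA : ∀ u, cvec hs A hA y u = if u ∈ σ then ((-γ u : ℤ) : ℚ) else 0 := by
    intro u
    have hsup : ∀ w, w ∉ A → (if w ∈ σ then ((-γ w : ℤ) : ℚ) else 0) = 0 := by
      intro w hw
      rw [if_neg (fun h => hw (hsub h))]
    have hyA' : y = ∑ v ∈ A, (if v ∈ σ then ((-γ v : ℤ) : ℚ) else 0) • toQ v := by
      rw [hyZ, ← Finset.sum_subset hsub]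
      · apply Finset.sum_congr rfl
        intro v hv
        rw [if_pos hv]
      · intro v _ hv
        rw [if_neg hv, zero_smul]
    rw [hyA']
    exact cvec_spec hs hA _ hsup u
  have hrep := rep_mem hs hcomp (F.gens.filter (fun v => c v ≠ 0)).card c hsupp hnn
    A hA hAn y hy hyA le_rfl
  have hfinal : (fun u => c u - cvec hs A hA y u) = ratify γ := by
    funext u
    rw [hcvecA u]
    simp only [hc, ratify]
    by_cases huσ : u ∈ σ
    · have h := hpos u huσ
      rw [if_pos huσ, if_neg (by omega : ¬ (0:ℤ) ≤ γ u)]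
      push_cast
      ring
    · have hge : 0 ≤ γ u := by
        by_contra hlt
        push_neg at hlt
        exact huσ (hneg u hlt)
      rw [if_neg huσ, if_pos hge, sub_zero]
  rw [← hfinal]
  exact coneSpan_WSet_subset_NE G hrep

end Stmt0
/-- Lemma 1.4. Let `γ ∈ A_1(X)` be given by a relation
`a_1 x_1 + ⋯ + a_h x_h - (b_1 y_1 + ⋯ + b_k y_k) = 0` (the elements of negative
coefficient being exactly the `y_j`, spanning the cone `σ ∈ Σ_X`). Then
`γ ∈ NE(X)`; equivalently, `γ` has nonnegative intersection with every
invariant nef divisor `D_φ = -∑ φ(x) V(x)` associated to an upper convex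
integral support function `φ`. -/
theorem statement0 {n : ℕ} (F : PreFan n) (hsmooth : F.IsSmooth) (hcomplete : F.IsComplete)
    (G : ToricGeom F) (γ : LatZ n → ℤ) (hγ : γ ∈ F.A1)
    (σ : Finset (LatZ n)) (hσ : σ ∈ F.cones)
    (hneg : ∀ u, γ u < 0 → u ∈ σ) (hpos : ∀ y ∈ σ, γ y < 0) :
    ratify γ ∈ G.NE ∧
      ∀ f : LatQ n → ℚ, IsSupportFn F f → IsUpperConvex f → IsIntegralFn f →
        0 ≤ -∑ v ∈ F.gens, f (toQ v) * (γ v : ℚ) := by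
  constructor
  · exact Stmt0.conj1 hsmooth hcomplete G hγ hσ hneg hpos
  · intro f hsf hconv _
    exact Stmt0.conj2 hcomplete hγ hσ hneg hpos f hsf hconv
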